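/- arXiv:1412.6419 — 7 statements merged into one kernel-verified Lean document; each statement's English description precedes it below -/
import Mathlib

section
/- Let $K$ be a number field of degree $n$. There is a constant $C$ depending only on $K$ such that for every real $H \geq 2$, the number of units $u \in \mathcal{O}_K^\times$ all of whose archimedean absolute values are at most $H$ is at most $C (\log H)^{r}$, where $r + 1$ is the number of archimedean places of $K$. -/
open NumberField

/-!
By Dirichlet's unit theorem every unit is uniquely `ζ * ∏ εᵢ ^ eᵢ` with `ζ` a root of unity and
`εᵢ` a fundamental system. The exponent vector `e` is the coordinate vector of the logarithmic
embedding of the unit in the real basis formed by the logarithmic embeddings of the `εᵢ`, so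
`|eᵢ| = O(‖log u‖)`. If `|u|_v ≤ H` at every place, the product formula `∑ n_v log |u|_v = 0`
turns these upper bounds into lower bounds as well, so `‖log u‖ ≤ [K : ℚ] log H`. Hence such units
are counted by the torsion times the integer points of a cube of side `O(log H)` in `ℤ^r`.
-/

theorem abs_le_sum_of_sum_eq_zero {ι : Type*} [Fintype ι] {a c : ι → ℝ}
    (hsum : ∑ i, a i = 0) (hle : ∀ i, a i ≤ c i) (hc : ∀ i, 0 ≤ c i) (j : ι) :
    |a j| ≤ ∑ i, c i := by
  have hcj : c j ≤ ∑ i, c i := Finset.single_le_sum (fun i _ ↦ hc i) (Finset.mem_univ j)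
  have hgap : c j - a j ≤ ∑ i, (c i - a i) :=
    Finset.single_le_sum (fun i _ ↦ sub_nonneg.mpr (hle i)) (Finset.mem_univ j)
  rw [Finset.sum_sub_distrib, hsum, sub_zero] at hgap
  exact abs_le.mpr ⟨by linarith [hc j], (hle j).trans hcj⟩

theorem Int.finite_and_ncard_cube_le {ι : Type*} [Fintype ι] [DecidableEq ι] {R : ℝ}
    (hR : 0 ≤ R) :
    {e : ι → ℤ | ∀ i, |(e i : ℝ)| ≤ R}.Finite ∧
      ({e : ι → ℤ | ∀ i, |(e i : ℝ)| ≤ R}.ncard : ℝ) ≤ (2 * R + 1) ^ Fintype.card ι := by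
  set cube := Fintype.piFinset fun _ : ι ↦ Finset.Icc (-⌊R⌋) ⌊R⌋
  have hsub : {e : ι → ℤ | ∀ i, |(e i : ℝ)| ≤ R} ⊆ cube := by
    intro e he
    simp only [cube, Finset.mem_coe, Fintype.mem_piFinset, Finset.mem_Icc, neg_le, Int.le_floor]
    intro i
    push_cast
    exact ⟨neg_le.mp (abs_le.mp (he i)).1, (abs_le.mp (he i)).2⟩
  refine ⟨cube.finite_toSet.subset hsub, ?_⟩
  have hcard : (cube.card : ℝ) = (2 * ⌊R⌋ + 1 : ℝ) ^ Fintype.card ι := by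
    rw [Fintype.card_piFinset, Finset.prod_const, Int.card_Icc, Finset.card_univ,
      show ⌊R⌋ + 1 - -⌊R⌋ = 2 * ⌊R⌋ + 1 by ring, Nat.cast_pow, ← Int.cast_natCast,
      Int.toNat_of_nonneg (by linarith [Int.floor_nonneg.mpr hR])]
    push_cast
    rfl
  calc _ ≤ (cube.card : ℝ) := by exact_mod_cast Set.ncard_le_ncard hsub cube.finite_toSet
    _ ≤ _ := by
        rw [hcard]
        gcongr
        exact Int.floor_le R

namespace NumberField.Units

open InfinitePlace dirichletUnitTheorem

variable {K : Type*} [Field K] [NumberField K]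

theorem ncard_le_card_torsion_mul_ncard {S : Set (𝓞 K)ˣ} {T : Set (Fin (rank K) → ℤ)}
    (hT : T.Finite)
    (hST : ∀ (ζ : torsion K) e, (ζ : (𝓞 K)ˣ) * ∏ i, fundSystem K i ^ e i ∈ S → e ∈ T) :
    S.ncard ≤ Nat.card (torsion K) * T.ncard := by
  choose ζe hζe _ using exist_unique_eq_mul_prod K
  calc S.ncard ≤ ((Set.univ : Set (torsion K)) ×ˢ T).ncard := by
        refine Set.ncard_le_ncard_of_injOn ζe (fun u hu ↦ ⟨trivial, hST _ _ (hζe u ▸ hu)⟩)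
          (fun u _ v _ huv ↦ ?_) (Set.finite_univ.prod hT)
        rw [hζe u, hζe v, huv]
    _ = Nat.card (torsion K) * T.ncard := by rw [Set.ncard_prod, Set.ncard_univ]

open scoped Classical

theorem norm_logEmbedding_le_of_forall_le {H : ℝ} (hH : 1 ≤ H) {u : (𝓞 K)ˣ}
    (hu : ∀ w : InfinitePlace K, w (u : K) ≤ H) :
    ‖logEmbedding K (Additive.ofMul u)‖ ≤ Module.finrank ℚ K * Real.log H := by
  have hlogH := Real.log_nonneg hH
  have hbound := abs_le_sum_of_sum_eq_zero (sum_mult_mul_log u)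
    (c := fun w ↦ mult w * Real.log H)
    (fun w ↦ mul_le_mul_of_nonneg_left (Real.log_le_log (pos_at_place u w) (hu w)) (by positivity))
    (fun w ↦ by positivity)
  rw [← Finset.sum_mul, ← Nat.cast_sum, sum_mult_eq] at hbound
  refine (pi_norm_le_iff_of_nonneg (by positivity)).mpr fun w ↦ ?_
  rw [Real.norm_eq_abs, logEmbedding_component]
  exact hbound w.val

theorem logEmbedding_mul_prod_fundSystem (ζ : torsion K) (e : Fin (rank K) → ℤ) :
    logEmbedding K (Additive.ofMul ((ζ : (𝓞 K)ˣ) * ∏ i, fundSystem K i ^ e i)) =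
      ∑ i, (e i : ℝ) • (basisUnitLattice K).ofZLatticeBasis ℝ (unitLattice K) i := by
  rw [ofMul_mul, map_add, logEmbedding_eq_zero_iff.mpr ζ.prop, zero_add, ofMul_prod, map_sum]
  refine Finset.sum_congr rfl fun i _ ↦ ?_
  rw [ofMul_zpow, map_zsmul, logEmbedding_fundSystem, Module.Basis.ofZLatticeBasis_apply,
    Int.cast_smul_eq_zsmul]

theorem exists_abs_exponent_le_mul_norm_logEmbedding :
    ∃ A : ℝ, 0 ≤ A ∧ ∀ (ζ : torsion K) (e : Fin (rank K) → ℤ) i,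
      |(e i : ℝ)| ≤
        A * ‖logEmbedding K (Additive.ofMul ((ζ : (𝓞 K)ˣ) * ∏ i, fundSystem K i ^ e i))‖ := by
  set b := (basisUnitLattice K).ofZLatticeBasis ℝ (unitLattice K)
  set L := b.equivFunL.toContinuousLinearMap
  refine ⟨‖L‖, norm_nonneg _, fun ζ e i ↦ ?_⟩
  set x := logEmbedding K (Additive.ofMul ((ζ : (𝓞 K)ˣ) * ∏ i, fundSystem K i ^ e i))
  have hcoord : L x = fun i ↦ (e i : ℝ) := by
    rw [show x = _ from logEmbedding_mul_prod_fundSystem ζ e,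
      ← b.equivFun_symm_apply (fun i ↦ (e i : ℝ))]
    exact b.equivFun.apply_symm_apply _
  calc |(e i : ℝ)| = ‖L x i‖ := by rw [hcoord, Real.norm_eq_abs]
    _ ≤ ‖L x‖ := norm_le_pi_norm (L x) i
    _ ≤ ‖L‖ * ‖x‖ := L.le_opNorm x

end NumberField.Units

open NumberField.Units dirichletUnitTheorem

/-- The number of units of the ring of integers of a number field, all of whose
archimedean absolute values are at most `H`, is `O_K((log H)^r)` where `r + 1`
is the number of archimedean places. -/
theorem unit_count_bound (K : Type*) [Field K] [NumberField K] :
    ∃ C : ℝ, 0 < C ∧ ∀ H : ℝ, 2 ≤ H →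
      (Set.ncard {u : (𝓞 K)ˣ | ∀ v : InfinitePlace K, v ((u : 𝓞 K) : K) ≤ H} : ℝ)
        ≤ C * (Real.log H) ^ (Fintype.card (InfinitePlace K) - 1) := by
  obtain ⟨A, hA, hexp⟩ := exists_abs_exponent_le_mul_norm_logEmbedding (K := K)
  set R := A * Module.finrank ℚ K
  have ht : 0 < Nat.card (torsion K) := Nat.card_pos
  refine ⟨Nat.card (torsion K) * (2 * R + 2) ^ rank K, by positivity, fun H hH ↦ ?_⟩
  have hlogH : 1 / 2 ≤ Real.log H := by
    linarith [Real.log_two_gt_d9, Real.log_le_log two_pos hH]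
  obtain ⟨hfin, hcube⟩ :=
    Int.finite_and_ncard_cube_le (ι := Fin (rank K)) (R := R * Real.log H) (by positivity)
  rw [Fintype.card_fin] at hcube
  have hcount := ncard_le_card_torsion_mul_ncard
    (S := {u | ∀ v : InfinitePlace K, v ((u : 𝓞 K) : K) ≤ H}) hfin
    fun ζ e hζe i ↦ (hexp ζ e i).trans <| by
      rw [mul_assoc]
      exact mul_le_mul_of_nonneg_left (norm_logEmbedding_le_of_forall_le (by linarith) hζe) hA
  calc _ ≤ (Nat.card (torsion K) : ℝ) * _ := by
        rw [← Nat.cast_mul]; exact Nat.cast_le.mpr hcount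
    _ ≤ Nat.card (torsion K) * (2 * (R * Real.log H) + 1) ^ rank K := by gcongr
    _ ≤ Nat.card (torsion K) * ((2 * R + 2) * Real.log H) ^ rank K := by gcongr; nlinarith
    _ = _ := by rw [mul_pow, mul_assoc]; rfl
end

section
/- Let $K$ be a number field of degree $n$, and let $\mathfrak{a}$ be a nonzero fractional ideal of $K$. Let $c > 0$ be a constant. Then the number of elements $x \in \mathfrak{a}$ all of whose archimedean absolute values are at most $c$ satisfies the bound $O_{K,c}(1 + 1/N(\mathfrak{a}))$, where $N(\mathfrak{a})$ is the (multiplicative) norm of the fractional ideal. -/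
/-!
A nonzero `z ∈ 𝔞` satisfies `N(𝔞) ≤ |N(z)| = ∏_v |z|_v ^ mult v`, so some `|z|_v` is at least
`t = N(𝔞) ^ (1/n)`: the elements of `𝔞` in the box `|x|_v ≤ c` are `t`-separated. Cutting the box
into cells of side `t / 2` (one real coordinate per real place, two per complex place), each cell
holds at most one of them, so there are at most `(4c/t + 3) ^ n ≤ (4c + 3) ^ n (1 + 1/N(𝔞))`.
-/

open scoped nonZeroDivisors

theorem FractionalIdeal.absNorm_le_absNorm_of_le {R K : Type*} [CommRing R] [IsDedekindDomain R]
    [Module.Free ℤ R] [Module.Finite ℤ R] [Field K] [Algebra R K] [IsFractionRing R K]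
    {I J : FractionalIdeal R⁰ K} (hI : I ≠ 0) (hIJ : I ≤ J) : absNorm J ≤ absNorm I := by
  have hJ : J ≠ 0 := ne_bot_of_le_ne_bot hI hIJ
  obtain ⟨I₀, hI₀⟩ : ∃ I₀ : Ideal R, (I₀ : FractionalIdeal R⁰ K) = J⁻¹ * I :=
    le_one_iff_exists_coeIdeal.mp <| (mul_le_mul_right hIJ _).trans_eq (inv_mul_cancel₀ hJ)
  have hI_eq : I = J * I₀ := by rw [hI₀, ← mul_assoc, mul_inv_cancel₀ hJ, one_mul]
  have hI₀ne : I₀ ≠ ⊥ := by rintro rfl; simp [hI_eq] at hI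
  rw [hI_eq, map_mul, coeIdeal_absNorm]
  refine le_mul_of_one_le_right (absNorm_nonneg J) ?_
  exact_mod_cast Nat.one_le_iff_ne_zero.mpr (Ideal.absNorm_eq_zero_iff.not.mpr hI₀ne)

theorem div_add_pow_le_add_pow_mul {a b t : ℝ} (ha : 0 ≤ a) (hb : 0 ≤ b) (ht : 0 < t) (n : ℕ) :
    (a / t + b) ^ n ≤ (a + b) ^ n * (1 + 1 / t ^ n) := by
  rcases le_total 1 t with h1t | ht1
  · calc (a / t + b) ^ n ≤ (a + b) ^ n := by gcongr; exact div_le_self ha h1t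
      _ ≤ (a + b) ^ n * (1 + 1 / t ^ n) :=
          le_mul_of_one_le_right (by positivity) (le_add_of_nonneg_right (by positivity))
  · calc (a / t + b) ^ n ≤ ((a + b) / t) ^ n := by
          gcongr; rw [add_div]; gcongr; exact le_div_self hb ht ht1
      _ = (a + b) ^ n * (1 / t ^ n) := by rw [div_pow, mul_one_div]
      _ ≤ (a + b) ^ n * (1 + 1 / t ^ n) := by gcongr; simp

theorem Int.floor_div_mem_Icc_ceil {a c ε : ℝ} (hε : 0 < ε) (ha : |a| ≤ c) :
    ⌊a / ε⌋ ∈ Finset.Icc (-(⌈c / ε⌉₊ : ℤ)) ⌈c / ε⌉₊ := by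
  have h : |a / ε| ≤ ⌈c / ε⌉₊ := by
    rw [abs_div, abs_of_pos hε]
    exact (div_le_div_of_nonneg_right ha hε.le).trans (Nat.le_ceil _)
  rw [abs_le] at h
  rw [Finset.mem_Icc, Int.le_floor, Int.floor_le_iff]
  constructor <;> push_cast <;> linarith

namespace NumberField

variable {K : Type*} [Field K] [NumberField K]

open InfinitePlace Module

theorem abs_norm_lt_pow_of_forall_infinitePlace_lt {x : K} (hx : x ≠ 0) {r : ℝ}
    (h : ∀ v : InfinitePlace K, v x < r) : |(Algebra.norm ℚ x : ℝ)| < r ^ finrank ℚ K := by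
  rw [← Rat.cast_abs, ← prod_eq_abs_norm, ← sum_mult_eq, ← Finset.prod_pow_eq_pow_sum]
  refine Finset.prod_lt_prod_of_nonempty (fun v _ ↦ ?_) (fun v _ ↦ ?_) Finset.univ_nonempty
  · exact pow_pos (pos_iff.mpr hx) _
  · exact pow_lt_pow_left₀ (h v) (apply_nonneg v x) mult_ne_zero

theorem _root_.FractionalIdeal.eq_zero_of_forall_infinitePlace_lt
    {𝔞 : FractionalIdeal (𝓞 K)⁰ K} {z : K} (hz : z ∈ 𝔞) {r : ℝ}
    (hr : r ^ finrank ℚ K ≤ (𝔞.absNorm : ℝ)) (h : ∀ v : InfinitePlace K, v z < r) : z = 0 := by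
  by_contra hz0
  have hspan : FractionalIdeal.spanSingleton (𝓞 K)⁰ z ≠ 0 :=
    (FractionalIdeal.spanSingleton_ne_zero_iff).mpr hz0
  have hle := FractionalIdeal.absNorm_le_absNorm_of_le hspan
    (FractionalIdeal.spanSingleton_le_iff_mem.mpr hz)
  rw [FractionalIdeal.absNorm_span_singleton] at hle
  have : (𝔞.absNorm : ℝ) ≤ |(Algebra.norm ℚ z : ℝ)| := by exact_mod_cast hle
  exact (hr.trans this).not_gt (abs_norm_lt_pow_of_forall_infinitePlace_lt hz0 h)

noncomputable def gridCell (ε : ℝ) (x : K) : InfinitePlace K → ℤ × ℤ :=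
  fun v ↦ (⌊(v.embedding x).re / ε⌋, ⌊(v.embedding x).im / ε⌋)

open Classical in
/-- At a real place only the row `0` of imaginary parts is used, so that the box has
`(2M + 1) ^ mult v` cells at `v`. -/
noncomputable def gridBox (K : Type*) [Field K] [NumberField K] (M : ℕ) :
    Finset (InfinitePlace K → ℤ × ℤ) :=
  Fintype.piFinset fun v ↦
    Finset.Icc (-(M : ℤ)) M ×ˢ (if v.IsReal then {0} else Finset.Icc (-(M : ℤ)) M)

theorem card_gridBox (M : ℕ) : (gridBox K M).card = (2 * M + 1) ^ finrank ℚ K := by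
  have hIcc : (Finset.Icc (-(M : ℤ)) M).card = 2 * M + 1 := by
    rw [Int.card_Icc]; omega
  classical
  rw [gridBox, Fintype.card_piFinset, ← sum_mult_eq, ← Finset.prod_pow_eq_pow_sum]
  refine Finset.prod_congr rfl fun v _ ↦ ?_
  by_cases hv : v.IsReal <;> simp [hv, mult, hIcc, sq]

theorem infinitePlace_sub_lt_of_gridCell_eq {ε : ℝ} (hε : 0 < ε) {x y : K}
    (h : gridCell ε x = gridCell ε y) (v : InfinitePlace K) : v (x - y) < 2 * ε := by
  have close : ∀ a b : ℝ, ⌊a / ε⌋ = ⌊b / ε⌋ → |a - b| < ε := fun a b hab ↦ by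
    simpa [← sub_div, abs_div, abs_of_pos hε, div_lt_one hε] using
      Int.abs_sub_lt_one_of_floor_eq_floor hab
  have hv := congrFun h v
  simp only [gridCell, Prod.mk.injEq] at hv
  rw [← norm_embedding_eq, map_sub]
  calc ‖v.embedding x - v.embedding y‖
      ≤ |(v.embedding x - v.embedding y).re| + |(v.embedding x - v.embedding y).im| :=
        Complex.norm_le_abs_re_add_abs_im _
    _ < ε + ε := by
        rw [Complex.sub_re, Complex.sub_im]
        exact add_lt_add (close _ _ hv.1) (close _ _ hv.2)
    _ = 2 * ε := by ring

theorem gridCell_mem_gridBox {ε c : ℝ} (hε : 0 < ε) {x : K}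
    (hx : ∀ v : InfinitePlace K, v x ≤ c) : gridCell ε x ∈ gridBox K ⌈c / ε⌉₊ := by
  classical
  have hnorm (v : InfinitePlace K) : ‖v.embedding x‖ ≤ c := (norm_embedding_eq v x).trans_le (hx v)
  rw [gridBox, Fintype.mem_piFinset]
  refine fun v ↦ Finset.mem_product.mpr ⟨?_, ?_⟩
  · exact Int.floor_div_mem_Icc_ceil hε ((Complex.abs_re_le_norm _).trans (hnorm v))
  · by_cases hv : v.IsReal
    · rw [if_pos hv, Finset.mem_singleton, gridCell, ← embedding_of_isReal_apply hv,
        Complex.ofReal_im, zero_div, Int.floor_zero]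
    · simpa [gridCell, hv] using
        Int.floor_div_mem_Icc_ceil hε ((Complex.abs_im_le_norm _).trans (hnorm v))

theorem ncard_le_of_forall_infinitePlace_le {S : Set K} {c δ : ℝ} (hc : 0 ≤ c) (hδ : 0 < δ)
    (hS : ∀ x ∈ S, ∀ v : InfinitePlace K, v x ≤ c)
    (hsep : ∀ x ∈ S, ∀ y ∈ S, (∀ v : InfinitePlace K, v (x - y) < δ) → x = y) :
    (S.ncard : ℝ) ≤ (4 * c / δ + 3) ^ finrank ℚ K := by
  have hε : 0 < δ / 2 := half_pos hδ
  have hinj : Set.InjOn (gridCell (δ / 2)) S := fun x hx y hy hxy ↦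
    hsep x hx y hy fun v ↦ by linarith [infinitePlace_sub_lt_of_gridCell_eq hε hxy v]
  have hcard := Set.ncard_le_ncard_of_injOn _ (fun x hx ↦ gridCell_mem_gridBox hε (hS x hx))
    hinj (gridBox K _).finite_toSet
  rw [Set.ncard_coe_finset, card_gridBox] at hcard
  have hM : (⌈c / (δ / 2)⌉₊ : ℝ) < c / (δ / 2) + 1 := Nat.ceil_lt_add_one (by positivity)
  calc (S.ncard : ℝ) ≤ ((2 * ⌈c / (δ / 2)⌉₊ + 1 : ℕ) : ℝ) ^ finrank ℚ K := by
        exact_mod_cast hcard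
    _ ≤ (4 * c / δ + 3) ^ finrank ℚ K := by
        gcongr
        push_cast
        rw [div_div_eq_mul_div] at hM
        linarith [show c * 2 / δ * 2 = 4 * c / δ by ring]

end NumberField

open NumberField

/-- The number of elements of a nonzero fractional ideal `𝔞` of a number field
whose archimedean absolute values are all at most `c` is `O_{K,c}(1 + 1/N(𝔞))`. -/
theorem fractional_ideal_small_elements (K : Type*) [Field K] [NumberField K]
    (c : ℝ) (hc : 0 < c) :
    ∃ C : ℝ, 0 < C ∧
      ∀ 𝔞 : FractionalIdeal (nonZeroDivisors (𝓞 K)) K, 𝔞 ≠ 0 →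
        (Set.ncard {x : K | x ∈ 𝔞 ∧ ∀ v : InfinitePlace K, v x ≤ c} : ℝ)
          ≤ C * (1 + 1 / (FractionalIdeal.absNorm 𝔞 : ℝ)) := by
  set n := Module.finrank ℚ K
  refine ⟨(4 * c + 3) ^ n, by positivity, fun 𝔞 h𝔞 ↦ ?_⟩
  have hN : 0 < (𝔞.absNorm : ℝ) := by
    exact_mod_cast (FractionalIdeal.absNorm_nonneg 𝔞).lt_of_ne'
      (FractionalIdeal.absNorm_eq_zero_iff.not.mpr h𝔞)
  set t := (𝔞.absNorm : ℝ) ^ (n⁻¹ : ℝ)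
  have ht : 0 < t := Real.rpow_pos_of_pos hN _
  have htn : t ^ n = 𝔞.absNorm := Real.rpow_inv_natCast_pow hN.le Module.finrank_pos.ne'
  calc _ ≤ (4 * c / t + 3) ^ n :=
        ncard_le_of_forall_infinitePlace_le hc.le ht (fun x hx ↦ hx.2) fun x hx y hy h ↦
          sub_eq_zero.mp <| FractionalIdeal.eq_zero_of_forall_infinitePlace_lt
            ((𝔞 : Submodule (𝓞 K) K).sub_mem hx.1 hy.1) htn.le h
    _ ≤ (4 * c + 3) ^ n * (1 + 1 / t ^ n) :=
        div_add_pow_le_add_pow_mul (by positivity) zero_le_three ht n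
    _ = _ := by rw [htn]
end

section
/- For positive reals $A_1, \ldots, A_n, B$, define $I(A_1, \ldots, A_n, B) = \mathrm{vol}\{(x_1,\ldots,x_n) \in \mathbb{R}^n : 0 \leq x_i \leq A_i \text{ for all } i,\ x_1 \cdots x_n \leq B\}$. Then $I(A_1, \ldots, A_n, B) \ll_n B \cdot \left(\log\left(\frac{A_1 \cdots A_n}{B} + 2\right)\right)^{n-1}$, with an implied constant depending only on $n$. -/
/-!
Integrate out the coordinate `x₀` first. Over a fixed `y = (x₁, …, xₘ)` the slice is an interval
of length `min (A₀, B / ∏ yⱼ) ≤ A₀ ^ ε (B / ∏ yⱼ) ^ (1 - ε)` for every `ε ∈ (0, 1]`. The right-hand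
side is a product of powers `yⱼ ^ (ε - 1)`, each of which integrates to `Aⱼ ^ ε / ε` over
`(0, Aⱼ]`, so the volume is at most `B (∏ A / B) ^ ε / ε ^ m`. The choice
`ε = log 2 / log (∏ A / B + 2)` keeps `(∏ A / B) ^ ε ≤ 2` and costs only `ε ^ (-m) ≍ log (…) ^ m`.
-/

open MeasureTheory Real Set

theorem MeasureTheory.Measure.pi_apply_eq_lintegral_insertNth {n : ℕ}
    {α : Fin (n + 1) → Type*} [∀ i, MeasurableSpace (α i)] (μ : ∀ i, Measure (α i))
    [∀ i, SigmaFinite (μ i)] (i : Fin (n + 1)) {s : Set (∀ j, α j)} (hs : MeasurableSet s) :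
    Measure.pi μ s =
      ∫⁻ y, μ i {t | i.insertNth t y ∈ s} ∂Measure.pi fun j => μ (i.succAbove j) := by
  have e := (measurePreserving_piFinSuccAbove μ i).symm
  rw [← e.measure_preimage hs.nullMeasurableSet,
    Measure.prod_apply_symm (hs.preimage e.measurable)]
  rfl

theorem min_le_rpow_mul_rpow {a b ε : ℝ} (ha : 0 ≤ a) (hb : 0 ≤ b) (hε₀ : 0 ≤ ε)
    (hε₁ : ε ≤ 1) : min a b ≤ a ^ ε * b ^ (1 - ε) := by
  have hm : 0 ≤ min a b := le_min ha hb
  have hε₁' : 0 ≤ 1 - ε := by linarith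
  calc min a b = min a b ^ ε * min a b ^ (1 - ε) := by
        rw [← rpow_add_of_nonneg hm hε₀ hε₁', add_sub_cancel, rpow_one]
    _ ≤ a ^ ε * b ^ (1 - ε) :=
        mul_le_mul (rpow_le_rpow hm (min_le_left a b) hε₀)
          (rpow_le_rpow hm (min_le_right a b) hε₁') (by positivity) (by positivity)

theorem volume_Icc_inter_mul_le {a b p ε : ℝ} (ha : 0 ≤ a) (hb : 0 ≤ b) (hp : 0 < p)
    (hε₀ : 0 ≤ ε) (hε₁ : ε ≤ 1) :
    volume {t | t ∈ Icc 0 a ∧ t * p ≤ b} ≤ ENNReal.ofReal (a ^ ε * (b / p) ^ (1 - ε)) := by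
  have hsub : {t | t ∈ Icc 0 a ∧ t * p ≤ b} ⊆ Icc 0 (min a (b / p)) := fun t ht =>
    ⟨ht.1.1, le_min ht.1.2 ((le_div_iff₀ hp).2 ht.2)⟩
  calc volume {t | t ∈ Icc 0 a ∧ t * p ≤ b} ≤ volume (Icc 0 (min a (b / p))) := measure_mono hsub
    _ = ENNReal.ofReal (min a (b / p)) := by rw [Real.volume_Icc, sub_zero]
    _ ≤ _ := ENNReal.ofReal_le_ofReal (min_le_rpow_mul_rpow ha (div_nonneg hb hp.le) hε₀ hε₁)

noncomputable def rpowWeight (a ε t : ℝ) : ℝ := (Ioc 0 a).indicator (fun s => s ^ (ε - 1)) t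

theorem rpowWeight_nonneg (a ε t : ℝ) : 0 ≤ rpowWeight a ε t :=
  indicator_nonneg (fun _ hs => rpow_nonneg (mem_Ioc.1 hs).1.le _) t

theorem integrable_rpowWeight (a : ℝ) {ε : ℝ} (hε : 0 < ε) : Integrable (rpowWeight a ε) :=
  (integrable_indicator_iff measurableSet_Ioc).2
    (intervalIntegral.intervalIntegrable_rpow' (by linarith)).1

theorem integral_rpowWeight {a ε : ℝ} (ha : 0 ≤ a) (hε : 0 < ε) :
    ∫ t, rpowWeight a ε t = a ^ ε / ε := by
  simp only [rpowWeight]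
  rw [integral_indicator measurableSet_Ioc, ← intervalIntegral.integral_of_le ha,
    integral_rpow (Or.inl (by linarith)), sub_add_cancel, zero_rpow hε.ne', sub_zero]

def boxProdSublevel {ι : Type*} [Fintype ι] (A : ι → ℝ) (B : ℝ) : Set (ι → ℝ) :=
  {x | (∀ i, x i ∈ Icc 0 (A i)) ∧ ∏ i, x i ≤ B}

theorem measurableSet_boxProdSublevel {ι : Type*} [Fintype ι] (A : ι → ℝ) (B : ℝ) :
    MeasurableSet (boxProdSublevel A B) := by
  have hbox : IsClosed {x : ι → ℝ | ∀ i, x i ∈ Icc 0 (A i)} := by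
    simp only [ofPred_forall]
    exact isClosed_iInter fun i => isClosed_Icc.preimage (continuous_apply i)
  exact (hbox.inter (isClosed_le (continuous_finsetProd _ fun i _ => continuous_apply i)
    continuous_const)).measurableSet

theorem volume_slice_boxProdSublevel_le {n : ℕ} {A : Fin (n + 1) → ℝ} (hA : ∀ i, 0 < A i)
    {B ε : ℝ} (hB : 0 < B) (hε₀ : 0 ≤ ε) (hε₁ : ε ≤ 1) {y : Fin n → ℝ} (hy : ∀ j, y j ≠ 0) :
    volume {t | Fin.insertNth 0 t y ∈ boxProdSublevel A B}
      ≤ ENNReal.ofReal (A 0 ^ ε * B ^ (1 - ε) * ∏ j, rpowWeight (A j.succ) ε (y j)) := by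
  simp only [boxProdSublevel, mem_ofPred_eq, Fin.insertNth_zero', Fin.forall_fin_succ,
    Fin.cons_zero, Fin.cons_succ, Fin.prod_univ_succ]
  by_cases hbox : ∀ j, y j ∈ Icc 0 (A j.succ)
  · have hpos : ∀ j, 0 < y j := fun j => (hbox j).1.lt_of_ne' (hy j)
    have hw : ∀ j, rpowWeight (A j.succ) ε (y j) = y j ^ (ε - 1) := fun j =>
      indicator_of_mem (show y j ∈ Ioc 0 (A j.succ) from ⟨hpos j, (hbox j).2⟩) _
    have hprod : 0 < ∏ j, y j := Finset.prod_pos fun j _ => hpos j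
    have hrw : (B / ∏ j, y j) ^ (1 - ε) = B ^ (1 - ε) * ∏ j, y j ^ (ε - 1) := by
      rw [div_rpow hB.le hprod.le, div_eq_mul_inv, ← rpow_neg hprod.le, neg_sub,
        finsetProd_rpow _ _ fun j _ => (hpos j).le]
    simp only [hbox, implies_true, and_true, hw, ← hrw, mul_assoc]
    exact volume_Icc_inter_mul_le (hA 0).le hB.le hprod hε₀ hε₁
  · simp only [hbox, and_false, false_and, ofPred_false, measure_empty]
    exact zero_le

theorem volume_boxProdSublevel_le {n : ℕ} {A : Fin (n + 1) → ℝ} (hA : ∀ i, 0 < A i) {B ε : ℝ}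
    (hB : 0 < B) (hε₀ : 0 < ε) (hε₁ : ε ≤ 1) :
    volume (boxProdSublevel A B) ≤ ENNReal.ofReal (B * ((∏ i, A i) / B) ^ ε / ε ^ n) := by
  have hA' : ∀ i, 0 ≤ A i := fun i => (hA i).le
  set c := A 0 ^ ε * B ^ (1 - ε) with hc_def
  have hc : 0 ≤ c := mul_nonneg (rpow_nonneg (hA' 0) _) (rpow_nonneg hB.le _)
  set w : (Fin n → ℝ) → ℝ := fun y => ∏ j, rpowWeight (A j.succ) ε (y j)
  have hw : Integrable w := Integrable.fintype_prod fun j => integrable_rpowWeight _ hε₀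
  have hw₀ : ∀ y, 0 ≤ w y := fun y => Finset.prod_nonneg fun j _ => rpowWeight_nonneg _ _ _
  have hne : ∀ᵐ y : Fin n → ℝ, ∀ j, y j ≠ 0 := ae_all_iff.2 fun j =>
    measure_eq_zero_iff_ae_notMem.1 (Measure.pi_hyperplane _ j 0)
  rw [volume_pi, Measure.pi_apply_eq_lintegral_insertNth _ 0 (measurableSet_boxProdSublevel A B)]
  calc ∫⁻ y : Fin n → ℝ, volume {t | Fin.insertNth 0 t y ∈ boxProdSublevel A B} ∂volume
      ≤ ∫⁻ y, ENNReal.ofReal (c * w y) :=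
        lintegral_mono_ae (hne.mono fun y hy =>
          volume_slice_boxProdSublevel_le hA hB hε₀.le hε₁ hy)
    _ = ENNReal.ofReal (c * ∏ j : Fin n, (A j.succ ^ ε / ε)) := by
        rw [← ofReal_integral_eq_lintegral_ofReal (hw.const_mul c)
          (ae_of_all _ fun y => mul_nonneg hc (hw₀ y)), integral_const_mul,
          integral_fintype_prod_volume_eq_prod]
        simp only [integral_rpowWeight (hA' _) hε₀]
    _ = ENNReal.ofReal (B * ((∏ i, A i) / B) ^ ε / ε ^ n) := by
        have hP : 0 ≤ ∏ j : Fin n, A j.succ := Finset.prod_nonneg fun j _ => hA' _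
        rw [hc_def, Fin.prod_univ_succ, Finset.prod_div_distrib, Finset.prod_const,
          Finset.card_univ, Fintype.card_fin, div_rpow (mul_nonneg (hA' 0) hP) hB.le,
          mul_rpow (hA' 0) hP, ← finsetProd_rpow _ _ fun j _ => hA' _, rpow_sub hB, rpow_one]
        field_simp

theorem rpow_log_two_div_log_add_two_le {x : ℝ} (hx : 0 ≤ x) :
    x ^ (log 2 / log (x + 2)) ≤ 2 := by
  have hlog : 0 < log (x + 2) := log_pos (by linarith)
  calc x ^ (log 2 / log (x + 2)) ≤ (x + 2) ^ (log 2 / log (x + 2)) :=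
        rpow_le_rpow hx (by linarith) (div_nonneg (log_pos one_lt_two).le hlog.le)
    _ = 2 := by rw [rpow_def_of_pos (by linarith), mul_div_cancel₀ _ hlog.ne', exp_log two_pos]

/-- The volume of the region `0 ≤ xᵢ ≤ Aᵢ`, `x₁⋯xₙ ≤ B` is
`≪_n B (log(A₁⋯Aₙ/B + 2))^{n-1}`. -/
theorem volume_box_product_bound (n : ℕ) (hn : 1 ≤ n) :
    ∃ C : ℝ, 0 < C ∧ ∀ (A : Fin n → ℝ) (B : ℝ), (∀ i, 0 < A i) → 0 < B →
      (volume {x : Fin n → ℝ |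
          (∀ i, x i ∈ Set.Icc 0 (A i)) ∧ ∏ i, x i ≤ B}).toReal
        ≤ C * B * (Real.log ((∏ i, A i) / B + 2)) ^ (n - 1) := by
  obtain ⟨m, rfl⟩ : ∃ m, n = m + 1 := ⟨n - 1, by omega⟩
  have hlog2 : 0 < log 2 := log_pos one_lt_two
  refine ⟨2 / log 2 ^ m, by positivity, fun A B hA hB => ?_⟩
  set x := (∏ i, A i) / B
  have hx : 0 ≤ x := (div_pos (Finset.prod_pos fun i _ => hA i) hB).le
  set L := log (x + 2)
  have hL : log 2 ≤ L := log_le_log two_pos (by linarith)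
  have hL₀ : 0 < L := hlog2.trans_le hL
  have hε₀ : 0 < log 2 / L := div_pos hlog2 hL₀
  have hε₁ : log 2 / L ≤ 1 := div_le_one_of_le₀ hL hL₀.le
  refine ENNReal.toReal_le_of_le_ofReal (by positivity)
    ((volume_boxProdSublevel_le hA hB hε₀ hε₁).trans (ENNReal.ofReal_le_ofReal ?_))
  calc B * x ^ (log 2 / L) / (log 2 / L) ^ m ≤ B * 2 / (log 2 / L) ^ m := by
        gcongr
        exact rpow_log_two_div_log_add_two_le hx
    _ = 2 / log 2 ^ m * B * L ^ (m + 1 - 1) := by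
        rw [Nat.add_sub_cancel, div_pow]
        field_simp
end

section
/- Let $\theta > 0$ and $n \geq 1$. For any small $\epsilon > 0$ and all $H \geq 1$ and $b \in (0,1)$, the integral $\int \frac{dx}{(1 + \max_i |x_i|)^{1+\theta}}$, taken over the set of $x = (x_1, \ldots, x_n) \in \mathbb{R}^n$ with $|x_1 \cdots x_n| \leq H^b$ and $\max_i |x_i| \geq H$, is $O_{n,\theta,\epsilon}(H^{-1-\theta+\epsilon+b})$. -/
/-!
For `x` in the region and any `s ≥ 0` we have `1 ≤ (H ^ b / ∏ |xᵢ|) ^ s`, and, since `‖x‖ ≥ H`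
and every `|xᵢ| ≤ ‖x‖`, also `(1 + ‖x‖) ^ (-(1 + θ)) ≤ H ^ (n q - 1 - θ) ∏ (1 + |xᵢ|) ^ (-q)`.
Multiplying, the integrand is dominated by `H ^ (b s + n q - 1 - θ) ∏ g(xᵢ)` with
`g t = |t| ^ (-s) (1 + |t|) ^ (-q)`, which is integrable on `ℝ` as soon as `s < 1 < s + q`; the
integral of the product is `(∫ g) ^ n`. Taking `q` small and `s = 1 - q / 2` makes
`b s + n q - 1 - θ ≤ -1 - θ + ε + b`.
-/

open MeasureTheory Real

open Set in
theorem integrable_comp_abs_of_integrableOn_Ioi {E : Type*} [NormedAddCommGroup E] {f : ℝ → E}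
    (hf : IntegrableOn f (Ioi 0)) : Integrable fun x => f |x| := by
  have hIoi : IntegrableOn (fun x => f |x|) (Ioi 0) :=
    hf.congr_fun (fun x hx => by rw [abs_of_pos (mem_Ioi.mp hx)]) measurableSet_Ioi
  have hIic : IntegrableOn (fun x => f |x|) (Iic 0) := by
    have hneg : MeasurableEmbedding fun x : ℝ => -x := (Homeomorph.neg ℝ).measurableEmbedding
    rw [← Measure.map_neg_eq_self (volume : Measure ℝ), hneg.integrableOn_map_iff]
    simp_rw [Function.comp_def, abs_neg, neg_preimage, neg_Iic, neg_zero]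
    exact (integrableOn_Ici_iff_integrableOn_Ioi).mpr hIoi
  rw [← integrableOn_univ, ← Iic_union_Ioi (a := (0 : ℝ))]
  exact hIic.union hIoi

open Set in
theorem integrableOn_Ioi_rpow_neg_mul_one_add_rpow_neg {s q : ℝ} (hs : s < 1) (hsq : 1 < s + q) :
    IntegrableOn (fun t : ℝ => t ^ (-s) * (1 + t) ^ (-q)) (Ioi 0) := by
  have hmeas : AEStronglyMeasurable (fun t : ℝ => t ^ (-s) * (1 + t) ^ (-q)) := by fun_prop
  have hnorm : ∀ t ∈ Ioi (0 : ℝ), ‖t ^ (-s) * (1 + t) ^ (-q)‖ = t ^ (-s) * (1 + t) ^ (-q) :=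
    fun t ht => Real.norm_of_nonneg (by have := mem_Ioi.mp ht; positivity)
  have hq : -q ≤ 0 := by linarith
  have hnear : IntegrableOn (fun t : ℝ => t ^ (-s) * (1 + t) ^ (-q)) (Ioc 0 1) := by
    refine Integrable.mono' ((intervalIntegral.intervalIntegrable_rpow' (r := -s) (by linarith)).1)
      hmeas.restrict ((ae_restrict_mem measurableSet_Ioc).mono fun t ht => ?_)
    rw [hnorm t ht.1]
    have ht0 : 0 < t := ht.1
    exact mul_le_of_le_one_right (by positivity) (rpow_le_one_of_one_le_of_nonpos (by linarith) hq)
  have hfar : IntegrableOn (fun t : ℝ => t ^ (-s) * (1 + t) ^ (-q)) (Ioi 1) := by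
    refine Integrable.mono'
      ((integrableOn_Ioi_rpow_iff one_pos).mpr (by linarith : -(s + q) < -1))
      hmeas.restrict ((ae_restrict_mem measurableSet_Ioi).mono fun t ht => ?_)
    have ht0 : (0 : ℝ) < t := one_pos.trans ht
    rw [hnorm t ht0, neg_add, rpow_add ht0]
    exact mul_le_mul_of_nonneg_left (rpow_le_rpow_of_nonpos ht0 (by linarith) hq) (by positivity)
  rw [← Ioc_union_Ioi_eq_Ioi zero_le_one]
  exact hnear.union hfar

theorem integrable_abs_rpow_neg_mul_one_add_abs_rpow_neg {s q : ℝ} (hs : s < 1)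
    (hsq : 1 < s + q) : Integrable fun t : ℝ => |t| ^ (-s) * (1 + |t|) ^ (-q) :=
  integrable_comp_abs_of_integrableOn_Ioi (integrableOn_Ioi_rpow_neg_mul_one_add_rpow_neg hs hsq)

section

variable {ι : Type*} [Fintype ι]

theorem one_add_norm_rpow_neg_le_prod (x : ι → ℝ) {q : ℝ} (hq : 0 ≤ q) :
    (1 + ‖x‖) ^ (-(Fintype.card ι * q)) ≤ ∏ i, (1 + |x i|) ^ (-q) :=
  calc (1 + ‖x‖) ^ (-(Fintype.card ι * q)) = ∏ _i : ι, (1 + ‖x‖) ^ (-q) := by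
        rw [Finset.prod_const, Finset.card_univ, ← rpow_natCast, ← rpow_mul (by positivity)]
        ring_nf
    _ ≤ ∏ i, (1 + |x i|) ^ (-q) := Finset.prod_le_prod (fun _ _ => by positivity) fun i _ =>
        rpow_le_rpow_of_nonpos (by positivity) (by simpa using norm_le_pi_norm x i)
          (neg_nonpos.mpr hq)

theorem one_le_rpow_mul_prod_abs_rpow_neg {x : ι → ℝ} {B s : ℝ} (hx : ∀ i, x i ≠ 0)
    (hB : |∏ i, x i| ≤ B) (hs : 0 ≤ s) : 1 ≤ B ^ s * ∏ i, |x i| ^ (-s) := by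
  have hP : 0 < |∏ i, x i| := abs_pos.mpr (Finset.prod_ne_zero_iff.mpr fun i _ => hx i)
  rw [finsetProd_rpow _ _ (fun i _ => abs_nonneg _), ← Finset.abs_prod, rpow_neg hP.le,
    ← div_eq_mul_inv, one_le_div (by positivity)]
  exact rpow_le_rpow hP.le hB hs

theorem one_add_norm_rpow_neg_le_of_abs_prod_le {x : ι → ℝ} {H B σ s q : ℝ}
    (hx : ∀ i, x i ≠ 0) (hB : |∏ i, x i| ≤ B) (hH : 0 < H) (hHx : H ≤ 1 + ‖x‖)
    (hs : 0 ≤ s) (hq : 0 ≤ q) (hqσ : Fintype.card ι * q ≤ σ) :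
    (1 + ‖x‖) ^ (-σ) ≤
      B ^ s * H ^ (Fintype.card ι * q - σ) * ∏ i, |x i| ^ (-s) * (1 + |x i|) ^ (-q) :=
  calc (1 + ‖x‖) ^ (-σ)
      = (1 + ‖x‖) ^ (Fintype.card ι * q - σ) * (1 + ‖x‖) ^ (-(Fintype.card ι * q)) := by
        rw [← rpow_add (by positivity)]
        ring_nf
    _ ≤ H ^ (Fintype.card ι * q - σ) * ∏ i, (1 + |x i|) ^ (-q) :=
        mul_le_mul (rpow_le_rpow_of_nonpos hH hHx (by linarith))
          (one_add_norm_rpow_neg_le_prod x hq) (by positivity) (by positivity)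
    _ ≤ (B ^ s * ∏ i, |x i| ^ (-s)) *
          (H ^ (Fintype.card ι * q - σ) * ∏ i, (1 + |x i|) ^ (-q)) :=
        le_mul_of_one_le_left (by positivity) (one_le_rpow_mul_prod_abs_rpow_neg hx hB hs)
    _ = _ := by
        rw [Finset.prod_mul_distrib]
        ring

theorem setIntegral_one_add_norm_rpow_neg_le {H b σ s q : ℝ} (hH : 0 < H) (hs₀ : 0 ≤ s)
    (hs : s < 1) (hsq : 1 < s + q) (hqσ : Fintype.card ι * q ≤ σ) :
    ∫ x in {x : ι → ℝ | |∏ i, x i| ≤ H ^ b ∧ H ≤ ‖x‖}, (1 + ‖x‖) ^ (-σ) ≤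
      H ^ (b * s + Fintype.card ι * q - σ) *
        (∫ t, |t| ^ (-s) * (1 + |t|) ^ (-q)) ^ Fintype.card ι := by
  set S := {x : ι → ℝ | |∏ i, x i| ≤ H ^ b ∧ H ≤ ‖x‖}
  set G := fun x : ι → ℝ => H ^ (b * s + Fintype.card ι * q - σ) *
    ∏ i, |x i| ^ (-s) * (1 + |x i|) ^ (-q)
  have hS : MeasurableSet S :=
    (measurableSet_le (by fun_prop : Measurable fun x : ι → ℝ => |∏ i, x i|)
      measurable_const).inter (measurableSet_le measurable_const measurable_norm)
  have hG : Integrable G :=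
    (Integrable.fintype_prod fun _ =>
      integrable_abs_rpow_neg_mul_one_add_abs_rpow_neg hs hsq).const_mul _
  have hcoord : ∀ᵐ x : ι → ℝ, ∀ i, x i ≠ 0 :=
    ae_all_iff.mpr fun i => Measure.ae_eval_ne _ i 0
  have hbound : ∀ᵐ x ∂volume.restrict S, (1 + ‖x‖) ^ (-σ) ≤ G x := by
    filter_upwards [ae_restrict_of_ae hcoord, ae_restrict_mem hS] with x hx ⟨hprod, hnorm⟩
    have := one_add_norm_rpow_neg_le_of_abs_prod_le hx hprod hH (by linarith) hs₀
      (by linarith) hqσ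
    refine this.trans_eq ?_
    simp only [G, ← rpow_mul hH.le, add_sub_assoc, rpow_add hH]
  calc ∫ x in S, (1 + ‖x‖) ^ (-σ)
      ≤ ∫ x in S, G x := integral_mono_of_nonneg (ae_of_all _ fun x => by positivity)
        hG.integrableOn hbound
    _ ≤ ∫ x, G x := setIntegral_le_integral hG (ae_of_all _ fun x => by positivity)
    _ = _ := by rw [integral_const_mul, integral_fintype_prod_volume_eq_pow
      fun t : ℝ => |t| ^ (-s) * (1 + |t|) ^ (-q)]

end

theorem integral_large_supnorm_small_product_general (n : ℕ)
    (θ : ℝ) (hθ : 0 < θ) :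
    ∀ ε : ℝ, 0 < ε → ∃ C : ℝ, 0 < C ∧
      ∀ H b : ℝ, 1 ≤ H → b ∈ Set.Ioo (0 : ℝ) 1 →
        (∫ x in {x : Fin n → ℝ | |∏ i, x i| ≤ H ^ b ∧ H ≤ ‖x‖},
            (1 + ‖x‖) ^ (-(1 + θ)) ∂volume)
          ≤ C * H ^ (-1 - θ + ε + b) := by
  intro ε hε
  set q : ℝ := min ε 1 / (n + 1 : ℝ)
  set s : ℝ := 1 - q / 2 with hs
  have hq : 0 < q := by positivity
  have hnq : n * q + q = min ε 1 := by
    rw [← add_one_mul, mul_div_cancel₀ _ (by positivity)]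
  have hmin : min ε 1 ≤ ε ∧ min ε 1 ≤ 1 := ⟨min_le_left _ _, min_le_right _ _⟩
  have hnq₀ : 0 ≤ n * q := by positivity
  set I := ∫ t : ℝ, |t| ^ (-s) * (1 + |t|) ^ (-q)
  refine ⟨I ^ n + 1, by positivity, fun H b hH hb => ?_⟩
  have hexp : b * s + n * q - (1 + θ) ≤ -1 - θ + ε + b := by
    have : b * s ≤ b := mul_le_of_le_one_right hb.1.le (by linarith)
    linarith
  calc _ ≤ H ^ (b * s + n * q - (1 + θ)) * I ^ n := by
        simpa using setIntegral_one_add_norm_rpow_neg_le (ι := Fin n) (H := H) (b := b)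
          (σ := 1 + θ) (by linarith) (by linarith) (by linarith) (by linarith)
          (by simp only [Fintype.card_fin]; linarith)
    _ ≤ H ^ (-1 - θ + ε + b) * (I ^ n + 1) :=
        mul_le_mul (rpow_le_rpow_of_exponent_le hH hexp) (by linarith) (by positivity)
          (by positivity)
    _ = _ := mul_comm _ _

/-- Integral of the sup-norm kernel over the region of small coordinate product
and large sup-norm: it is `O(H^{-1-θ+ε+b})`. -/
theorem integral_large_supnorm_small_product (n : ℕ) (hn : 1 ≤ n)
    (θ : ℝ) (hθ : 0 < θ) :
    ∀ ε : ℝ, 0 < ε → ∃ C : ℝ, 0 < C ∧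
      ∀ H b : ℝ, 1 ≤ H → b ∈ Set.Ioo (0 : ℝ) 1 →
        (∫ x in {x : Fin n → ℝ | |∏ i, x i| ≤ H ^ b ∧ H ≤ ‖x‖},
            (1 + ‖x‖) ^ (-(1 + θ)) ∂volume)
          ≤ C * H ^ (-1 - θ + ε + b) :=
  integral_large_supnorm_small_product_general n θ hθ
end

section
/- Let $K$ be a number field of degree $n$ with fixed nonzero integral ideal $\mathfrak{n}$ and $\mathbb{Z}$-basis $\omega_1,\ldots,\omega_n$ of $\mathfrak{n}$, $R$ the associated fundamental domain in $V = K\otimes_\mathbb{Q}\mathbb{R}$, and for $\gamma \in R \cap K$ let $\mathfrak{a}_\gamma = \{\beta \in \mathcal{O}_K : \beta\gamma \in \mathfrak{n}\}$ be the denominator ideal. Then for any $T \geq 1$ and $H \geq 2$, the number of tuples $\gamma = (\gamma_1,\ldots,\gamma_T) \in (R \cap K)^T$ with $N(\bigcap_{i} \mathfrak{a}_{\gamma_i}) \leq H$ is $O_{K,\mathfrak{n},T}(H^{T+1})$. -/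
open NumberField

/-- The denominator ideal `𝔞_γ = {β ∈ 𝓞_K : βγ ∈ 𝔫}` of `γ ∈ K` relative to the
integral ideal `𝔫`. -/
def denomIdeal {K : Type*} [Field K] [NumberField K] (𝔫 : Ideal (𝓞 K)) (γ : K) :
    Ideal (𝓞 K) :=
  Submodule.comap (LinearMap.toSpanSingleton (𝓞 K) K γ)
    (Submodule.map (Algebra.linearMap (𝓞 K) K) 𝔫)

/-! If `𝔞 = ⋂ᵢ 𝔞_{γᵢ}` has norm at most `H`, Minkowski's bound gives a nonzero `β ∈ 𝔞` with
`N(β) ≪ N(𝔞) ≤ H`. Then every `βγᵢ` lies in `𝔫`, and since `R` is a fundamental domain for `𝔫`,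
`γᵢ` is determined by `βγᵢ mod β𝔫`; so once `𝔞` is fixed each `γᵢ` takes at most
`N(β𝔫) ≪ H` values. Finally there are only `O(H)` ideals of norm at most `H`. -/

namespace BoundedDenominator

open Module Ideal Filter Topology NumberField.InfinitePlace
open scoped nonZeroDivisors

theorem _root_.Filter.Tendsto.exists_pos_le_mul_of_monotone {f : ℝ → ℝ} (hf : Monotone f)
    {L : ℝ} (h : Tendsto (fun s ↦ f s / s) atTop (𝓝 L)) :
    ∃ C, 0 < C ∧ ∀ s, 1 ≤ s → f s ≤ C * s := by
  obtain ⟨s₀, hs₀⟩ := eventually_atTop.mp (h.eventually (gt_mem_nhds (lt_add_one L)))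
  refine ⟨max (L + 1) (|f s₀| + 1), lt_max_of_lt_right (by positivity), fun s hs ↦ ?_⟩
  rcases le_total s₀ s with hs₀s | hss₀
  · have hlt := (div_lt_iff₀ (by linarith)).mp (hs₀ s hs₀s)
    nlinarith [le_max_left (L + 1) (|f s₀| + 1)]
  · calc f s ≤ |f s₀| + 1 := by linarith [hf hss₀, le_abs_self (f s₀)]
      _ ≤ max (L + 1) (|f s₀| + 1) := le_max_right _ _
      _ ≤ max (L + 1) (|f s₀| + 1) * s :=
        le_mul_of_one_le_right (lt_max_of_lt_right (by positivity)).le hs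

variable {K : Type*} [Field K] [NumberField K]

variable (K) in
theorem finite_setOf_absNorm_le (s : ℝ) :
    {𝔞 : (Ideal (𝓞 K))⁰ | (absNorm (𝔞 : Ideal (𝓞 K)) : ℝ) ≤ s}.Finite :=
  (finite_setOfPred_absNorm_le₀ ⌊s⌋₊).subset fun _ h𝔞 ↦ Nat.le_floor h𝔞

variable (K) in
theorem exists_card_absNorm_le_le_mul : ∃ C : ℝ, 0 < C ∧ ∀ s : ℝ, 1 ≤ s →
    (Nat.card {𝔞 : (Ideal (𝓞 K))⁰ // absNorm (𝔞 : Ideal (𝓞 K)) ≤ s} : ℝ) ≤ C * s := by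
  refine (NumberField.Ideal.tendsto_norm_le_div_atTop₀ K).exists_pos_le_mul_of_monotone
    fun s t hst ↦ ?_
  exact_mod_cast Nat.card_mono (finite_setOf_absNorm_le K t) fun _ (h𝔞 : _ ≤ s) ↦ h𝔞.trans hst

theorem mem_denomIdeal_iff {𝔫 : Ideal (𝓞 K)} {γ : K} {β : 𝓞 K} :
    β ∈ denomIdeal 𝔫 γ ↔ ∃ μ ∈ 𝔫, algebraMap (𝓞 K) K μ = algebraMap (𝓞 K) K β * γ := by
  simp only [denomIdeal, Submodule.mem_comap, LinearMap.toSpanSingleton_apply,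
    Submodule.mem_map, Algebra.linearMap_apply, Algebra.smul_def]

theorem denomIdeal_ne_bot {𝔫 : Ideal (𝓞 K)} (h𝔫 : 𝔫 ≠ ⊥) (γ : K) : denomIdeal 𝔫 γ ≠ ⊥ := by
  obtain ⟨ν, hν𝔫, hν⟩ := Submodule.exists_mem_ne_zero_of_ne_bot h𝔫
  obtain ⟨d, a, ha⟩ := IsLocalization.exists_integer_multiple (𝓞 K)⁰ γ
  rw [Algebra.smul_def] at ha
  refine (Submodule.ne_bot_iff _).mpr ⟨ν * d, mem_denomIdeal_iff.mpr
    ⟨ν * a, mul_mem_right a _ hν𝔫, ?_⟩, mul_ne_zero hν (nonZeroDivisors.ne_zero d.2)⟩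
  rw [map_mul, map_mul, ha, mul_assoc]

theorem iInf_denomIdeal_mem_nonZeroDivisors {ι : Type*} [Fintype ι] {𝔫 : Ideal (𝓞 K)}
    (h𝔫 : 𝔫 ≠ ⊥) (γ : ι → K) : ⨅ i, denomIdeal 𝔫 (γ i) ∈ (Ideal (𝓞 K))⁰ := by
  classical
  have hprod : ∏ i, denomIdeal 𝔫 (γ i) ≠ ⊥ :=
    Finset.prod_ne_zero_iff.mpr fun i _ ↦ denomIdeal_ne_bot h𝔫 (γ i)
  have hle : ∏ i, denomIdeal 𝔫 (γ i) ≤ ⨅ i, denomIdeal 𝔫 (γ i) := by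
    rw [← Finset.inf_univ_eq_iInf]
    exact prod_le_inf
  exact mem_nonZeroDivisors_of_ne_zero (ne_bot_of_le_ne_bot hprod hle)

variable (K) in
theorem exists_ne_zero_mem_absNorm_span_singleton_le : ∃ M : ℝ, 0 < M ∧
    ∀ 𝔞 ∈ (Ideal (𝓞 K))⁰, ∃ β ∈ 𝔞, β ≠ 0 ∧ (absNorm (span {β}) : ℝ) ≤ M * absNorm 𝔞 := by
  refine ⟨max ((4 / Real.pi) ^ nrComplexPlaces K * (finrank ℚ K).factorial /
    (finrank ℚ K) ^ (finrank ℚ K) * Real.sqrt |discr K|) 1, by positivity, fun 𝔞 h𝔞 ↦ ?_⟩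
  obtain ⟨x, hx𝔞, hx, hxnorm⟩ := exists_ne_zero_mem_ideal_of_norm_le_mul_sqrt_discr K
    (Units.mk0 (𝔞 : FractionalIdeal (𝓞 K)⁰ K)
      (FractionalIdeal.coeIdeal_ne_zero.mpr (nonZeroDivisors.ne_zero h𝔞)))
  obtain ⟨β, hβ𝔞, rfl⟩ := (FractionalIdeal.mem_coeIdeal _).mp hx𝔞
  refine ⟨β, hβ𝔞, by rintro rfl; simp at hx, ?_⟩
  have hβnorm : (absNorm (span {β}) : ℚ) = |Algebra.norm ℚ (algebraMap (𝓞 K) K β)| := by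
    rw [← FractionalIdeal.coeIdeal_absNorm (K := K), FractionalIdeal.coeIdeal_span_singleton,
      FractionalIdeal.absNorm_span_singleton]
  simp only [Units.val_mk0, FractionalIdeal.coeIdeal_absNorm, ← hβnorm] at hxnorm
  push_cast at hxnorm
  calc (absNorm (span {β}) : ℝ) ≤ _ * absNorm 𝔞 := by linear_combination hxnorm
    _ ≤ _ := mul_le_mul_of_nonneg_right (le_max_left _ _) (Nat.cast_nonneg _)

section Box

variable {ι V : Type*} [AddCommGroup V] [Module ℚ V]

/-- The paper's `R ∩ K` when `bK` is the basis `ω₁, …, ωₙ` of `𝔫`. -/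
def halfOpenBox (bK : Basis ι ℚ V) : Set V := {x | ∀ j, bK.repr x j ∈ Set.Ico 0 1}

theorem eq_of_mem_halfOpenBox_of_repr_sub_eq_intCast {bK : Basis ι ℚ V} {x y : V}
    (hx : x ∈ halfOpenBox bK) (hy : y ∈ halfOpenBox bK)
    (hxy : ∀ j, ∃ z : ℤ, bK.repr (x - y) j = z) : x = y := by
  refine bK.repr.injective (Finsupp.ext fun j ↦ ?_)
  rw [← Int.fract_eq_self.mpr (hx j), ← Int.fract_eq_self.mpr (hy j)]
  exact Int.fract_eq_fract.mpr (by simpa only [map_sub, Finsupp.sub_apply] using hxy j)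

end Box

theorem repr_algebraMap_of_mem {ι : Type*} {𝔫 : Ideal (𝓞 K)} {b : Basis ι ℤ 𝔫}
    {bK : Basis ι ℚ K} (hcompat : ∀ i, bK i = algebraMap (𝓞 K) K ((b i : 𝓞 K)))
    {ν : 𝓞 K} (hν : ν ∈ 𝔫) (j : ι) :
    bK.repr (algebraMap (𝓞 K) K ν) j = b.repr ⟨ν, hν⟩ j := by
  let f : 𝔫 →ₗ[ℤ] ι →₀ ℚ := bK.repr.toLinearMap.restrictScalars ℤ ∘ₗ
    (Algebra.linearMap (𝓞 K) K).restrictScalars ℤ ∘ₗ 𝔫.subtype.restrictScalars ℤ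
  let g : 𝔫 →ₗ[ℤ] ι →₀ ℚ :=
    Finsupp.mapRange.linearMap (Algebra.linearMap ℤ ℚ) ∘ₗ b.repr.toLinearMap
  have hfg : f = g := b.ext fun i ↦ by simp [f, g, ← hcompat]
  exact congr($hfg ⟨ν, hν⟩ j)

theorem encard_setOf_mem_denomIdeal_le {ι : Type*} {𝔫 : Ideal (𝓞 K)} (h𝔫 : 𝔫 ≠ ⊥)
    {b : Basis ι ℤ 𝔫} {bK : Basis ι ℚ K}
    (hcompat : ∀ i, bK i = algebraMap (𝓞 K) K ((b i : 𝓞 K))) {β : 𝓞 K} (hβ : β ≠ 0) :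
    {γ ∈ halfOpenBox bK | β ∈ denomIdeal 𝔫 γ}.encard ≤ absNorm (span {β} * 𝔫) := by
  have hβK : algebraMap (𝓞 K) K β ≠ 0 := by simpa using hβ
  set G : Set (𝓞 K) := {μ ∈ 𝔫 | algebraMap (𝓞 K) K μ / algebraMap (𝓞 K) K β ∈ halfOpenBox bK}
  have hsub : {γ ∈ halfOpenBox bK | β ∈ denomIdeal 𝔫 γ} ⊆
      (fun μ ↦ algebraMap (𝓞 K) K μ / algebraMap (𝓞 K) K β) '' G := by
    rintro γ ⟨hγ, hβγ⟩
    obtain ⟨μ, hμ, hμγ⟩ := mem_denomIdeal_iff.mp hβγ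
    have hγμ : algebraMap (𝓞 K) K μ / algebraMap (𝓞 K) K β = γ := by
      rw [hμγ, mul_div_cancel_left₀ _ hβK]
    exact ⟨μ, ⟨hμ, hγμ ▸ hγ⟩, hγμ⟩
  -- `R` is a fundamental domain for `𝔫`, so `μ / β ∈ R` is determined by `μ` modulo `β𝔫`.
  have hinj : Set.InjOn (Ideal.Quotient.mk (span {β} * 𝔫)) G := by
    rintro μ ⟨-, hμ⟩ μ' ⟨-, hμ'⟩ h
    obtain ⟨ν, hν, hβν⟩ := mem_span_singleton_mul.mp (Ideal.Quotient.eq.mp h)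
    have hdiff : algebraMap (𝓞 K) K μ / algebraMap (𝓞 K) K β -
        algebraMap (𝓞 K) K μ' / algebraMap (𝓞 K) K β = algebraMap (𝓞 K) K ν := by
      rw [← sub_div, ← map_sub, ← hβν, map_mul, mul_div_cancel_left₀ _ hβK]
    have := eq_of_mem_halfOpenBox_of_repr_sub_eq_intCast hμ hμ' fun j ↦
      ⟨b.repr ⟨ν, hν⟩ j, by rw [hdiff, repr_algebraMap_of_mem hcompat hν]⟩
    exact IsFractionRing.injective (𝓞 K) K ((div_left_inj' hβK).mp this)
  have hcard : Nat.card (𝓞 K ⧸ span {β} * 𝔫) = absNorm (span {β} * 𝔫) := by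
    rw [absNorm_apply, Submodule.cardQuot_apply]
  have : Finite (𝓞 K ⧸ span {β} * 𝔫) := Nat.finite_of_card_ne_zero <| by
    rw [hcard, Ne, absNorm_eq_zero_iff, mul_eq_bot, span_singleton_eq_bot]
    exact not_or_intro hβ h𝔫
  calc _ ≤ ((fun μ ↦ algebraMap (𝓞 K) K μ / algebraMap (𝓞 K) K β) '' G).encard :=
        Set.encard_le_encard hsub
    _ ≤ G.encard := Set.encard_image_le _ _
    _ ≤ (Set.univ : Set (𝓞 K ⧸ span {β} * 𝔫)).encard :=
        Set.encard_le_encard_of_injOn (Set.mapsTo_univ _ _) hinj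
    _ = absNorm (span {β} * 𝔫) := by rw [Set.encard_univ, ENat.card_eq_coe_natCard, hcard]

theorem encard_setOf_absNorm_iInf_denomIdeal_le {ι : Type*} {𝔫 : Ideal (𝓞 K)} (h𝔫 : 𝔫 ≠ ⊥)
    {b : Basis ι ℤ 𝔫} {bK : Basis ι ℚ K}
    (hcompat : ∀ i, bK i = algebraMap (𝓞 K) K ((b i : 𝓞 K))) {T : Type*} [Fintype T]
    {M : ℝ} (hM₀ : 0 ≤ M)
    (hM : ∀ 𝔞 ∈ (Ideal (𝓞 K))⁰, ∃ β ∈ 𝔞, β ≠ 0 ∧ (absNorm (span {β}) : ℝ) ≤ M * absNorm 𝔞)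
    (H : ℝ) :
    {γ : T → K | (∀ i, γ i ∈ halfOpenBox bK) ∧
        (absNorm (⨅ i, denomIdeal 𝔫 (γ i)) : ℝ) ≤ H}.encard ≤
      Nat.card {𝔞 : (Ideal (𝓞 K))⁰ // absNorm (𝔞 : Ideal (𝓞 K)) ≤ H} *
        ⌊M * H * absNorm 𝔫⌋₊ ^ Fintype.card T := by
  classical
  set A := {𝔞 : (Ideal (𝓞 K))⁰ // (absNorm (𝔞 : Ideal (𝓞 K)) : ℝ) ≤ H}
  have : Finite A := (finite_setOf_absNorm_le K H).to_subtype
  have := Fintype.ofFinite A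
  choose β hβ𝔞 hβ0 hβnorm using hM
  let F : A → Set K := fun 𝔞 ↦ {γ ∈ halfOpenBox bK | β 𝔞.1 𝔞.1.2 ∈ denomIdeal 𝔫 γ}
  have hcover : {γ : T → K | (∀ i, γ i ∈ halfOpenBox bK) ∧
      (absNorm (⨅ i, denomIdeal 𝔫 (γ i)) : ℝ) ≤ H} ⊆ ⋃ 𝔞 : A, Set.univ.pi fun _ ↦ F 𝔞 := by
    rintro γ ⟨hγ, hH⟩
    refine Set.mem_iUnion.mpr ⟨⟨⟨_, iInf_denomIdeal_mem_nonZeroDivisors h𝔫 γ⟩, hH⟩,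
      fun i _ ↦ ⟨hγ i, iInf_le (fun i ↦ denomIdeal 𝔫 (γ i)) i (hβ𝔞 _ _)⟩⟩
  have hF : ∀ 𝔞 : A, (F 𝔞).encard ≤ ⌊M * H * absNorm 𝔫⌋₊ := by
    intro 𝔞
    refine (encard_setOf_mem_denomIdeal_le h𝔫 hcompat (hβ0 _ _)).trans ?_
    refine Nat.cast_le.mpr (Nat.le_floor ?_)
    rw [map_mul, Nat.cast_mul]
    gcongr
    exact (hβnorm _ _).trans (mul_le_mul_of_nonneg_left 𝔞.2 hM₀)
  calc _ ≤ (⋃ 𝔞 : A, Set.univ.pi fun _ ↦ F 𝔞).encard := Set.encard_le_encard hcover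
    _ ≤ ∑ 𝔞 : A, (Set.univ.pi fun _ ↦ F 𝔞).encard := Set.encard_iUnion_le_of_fintype _
    _ ≤ ∑ _ : A, (⌊M * H * absNorm 𝔫⌋₊ : ℕ∞) ^ Fintype.card T :=
        Finset.sum_le_sum fun 𝔞 _ ↦ by
          rw [Set.encard_pi_eq_prod_encard]
          exact Finset.prod_le_pow_card _ _ _ fun _ _ ↦ hF 𝔞
    _ = _ := by simp [Nat.card_eq_fintype_card]

end BoundedDenominator

theorem count_bounded_denominator_general (K : Type*) [Field K] [NumberField K]
    (n : ℕ) (𝔫 : Ideal (𝓞 K)) (h𝔫 : 𝔫 ≠ ⊥) (b : Module.Basis (Fin n) ℤ 𝔫)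
    (bK : Module.Basis (Fin n) ℚ K)
    (hcompat : ∀ i, bK i = algebraMap (𝓞 K) K ((b i : 𝓞 K)))
    (T : ℕ) :
    ∃ C : ℝ, 0 < C ∧ ∀ H : ℝ, 2 ≤ H →
      (Set.ncard {γ : Fin T → K |
          (∀ i, ∀ j, (bK.repr (γ i) j : ℚ) ∈ Set.Ico (0 : ℚ) 1) ∧
          (Ideal.absNorm (⨅ i, denomIdeal 𝔫 (γ i)) : ℝ) ≤ H} : ℝ)
        ≤ C * H ^ (T + 1) := by
  obtain ⟨C, hC, hcount⟩ := BoundedDenominator.exists_card_absNorm_le_le_mul K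
  obtain ⟨M, hM, hminkowski⟩ :=
    BoundedDenominator.exists_ne_zero_mem_absNorm_span_singleton_le K
  have h𝔫norm : (0 : ℝ) < Ideal.absNorm 𝔫 :=
    Nat.cast_pos.mpr (Nat.pos_of_ne_zero (Ideal.absNorm_eq_zero_iff.not.mpr h𝔫))
  refine ⟨C * (M * Ideal.absNorm 𝔫) ^ T, by positivity, fun H hH ↦ ?_⟩
  have hencard := BoundedDenominator.encard_setOf_absNorm_iInf_denomIdeal_le h𝔫 hcompat
    (T := Fin T) hM.le hminkowski H
  rw [Fintype.card_fin] at hencard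
  have hncard := (Set.encard_le_coe_iff_finite_ncard_le.mp (by exact_mod_cast hencard)).2
  calc _ ≤ (Nat.card {𝔞 : nonZeroDivisors (Ideal (𝓞 K)) //
          Ideal.absNorm (𝔞 : Ideal (𝓞 K)) ≤ H} : ℝ) * (⌊M * H * Ideal.absNorm 𝔫⌋₊ : ℝ) ^ T := by
        exact_mod_cast hncard
    _ ≤ (C * H) * (M * H * Ideal.absNorm 𝔫) ^ T := by
        gcongr
        · exact hcount H (by linarith)
        · exact Nat.floor_le (by positivity)
    _ = C * (M * Ideal.absNorm 𝔫) ^ T * H ^ (T + 1) := by ring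

/-- The number of tuples `γ ∈ (R ∩ K)^T` whose common denominator ideal has norm
at most `H` is `O(H^{T+1})`. Here membership in `R` means that all coordinates of
`γᵢ` with respect to the fixed `ℤ`-basis of `𝔫` lie in `[0,1)`. -/
theorem count_bounded_denominator (K : Type*) [Field K] [NumberField K]
    (n : ℕ) (𝔫 : Ideal (𝓞 K)) (h𝔫 : 𝔫 ≠ ⊥) (b : Module.Basis (Fin n) ℤ 𝔫)
    (bK : Module.Basis (Fin n) ℚ K)
    (hcompat : ∀ i, bK i = algebraMap (𝓞 K) K ((b i : 𝓞 K)))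
    (T : ℕ) (hT : 1 ≤ T) :
    ∃ C : ℝ, 0 < C ∧ ∀ H : ℝ, 2 ≤ H →
      (Set.ncard {γ : Fin T → K |
          (∀ i, ∀ j, (bK.repr (γ i) j : ℚ) ∈ Set.Ico (0 : ℚ) 1) ∧
          (Ideal.absNorm (⨅ i, denomIdeal 𝔫 (γ i)) : ℝ) ≤ H} : ℝ)
        ≤ C * H ^ (T + 1) :=
  count_bounded_denominator_general K n 𝔫 h𝔫 b bK hcompat T
end

section
/- Let $K$ be a number field of degree $n$ with integral ideal $\mathfrak{n}$, $\mathbb{Z}$-basis $\omega_1,\ldots,\omega_n$ of $\mathfrak{n}$, and coordinate sup-norm $|\cdot|$ on $V = K \otimes_\mathbb{Q} \mathbb{R}$. Fix $T \geq 1$ and reals $D \geq 1$, $\varpi \in (0, 1/3)$. For $\gamma \in (R \cap K)^T$ with denominator ideal $\mathfrak{a}_\gamma$ (the intersection of the componentwise denominator ideals), define the major arc $\mathfrak{M}_\gamma$ as the set of $\alpha \in R^T$ with $|\alpha_i - \gamma_i| \leq P^{-d_i + \varpi}$ (distance modulo $\mathfrak{n}$) for prescribed degrees $1 \leq d_i \leq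 D$. Then there exists $P_0$ (depending on $K$, $\mathfrak{n}$, the basis, $T$, $D$, $\varpi$) such that for all $P \geq P_0$: if $\gamma_1 \neq \gamma_2 \in (R \cap K)^T$ both satisfy $N(\mathfrak{a}_{\gamma_j}) \leq P^\varpi$, then $\mathfrak{M}_{\gamma_1} \cap \mathfrak{M}_{\gamma_2} = \emptyset$. -/
open NumberField

/-- The major arc `𝔐_γ` associated to `γ ∈ (R ∩ K)^T`: the set of `α ∈ R^T`
(coordinates with respect to the basis `bK` of `K`, extended to `V ≅ ℝ^n`) such
that for each `i` the distance modulo `𝔫` from `α i` to `γ i` is at most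
`P^{-dᵢ+ϖ}` in the coordinate sup-norm; the lattice `𝔫` has integer coordinates. -/
def majorArc {K : Type*} [Field K] [NumberField K] {n T : ℕ}
    (bK : Module.Basis (Fin n) ℚ K) (d : Fin T → ℕ) (ϖ P : ℝ) (γ : Fin T → K) :
    Set (Fin T → Fin n → ℝ) :=
  {α | (∀ i j, α i j ∈ Set.Ico (0 : ℝ) 1) ∧
    ∀ i, ∃ m : Fin n → ℤ,
      ‖(α i) - (fun j => ((bK.repr (γ i) j : ℚ) : ℝ)) - (fun j => (m j : ℝ))‖
        ≤ P ^ (-(d i : ℝ) + ϖ)}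

/-!
If `α` lies on both arcs, then for each `i` every coordinate of `δ = γ₁ i - γ₂ i` lies within
`2 P^{-dᵢ+ϖ}` of an integer. The integer `N = N(𝔞_{γ₁}) N(𝔞_{γ₂})` lies in both denominator
ideals (an ideal contains its norm), hence in that of `δ`, so `N δ ∈ 𝔫` has integer coordinates.
Since `N · 2 P^{-dᵢ+ϖ} ≤ 2 P^{3ϖ-1} < 1` for large `P`, the coordinates of `δ` are themselves
integers, and as those of `γ₁ i` and `γ₂ i` lie in `[0, 1)`, they agree.
-/

open Filter Set

lemma eq_intCast_of_natCast_mul_eq_intCast {q ε : ℝ} {N : ℕ} {c k : ℤ} (hN : N ≠ 0)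
    (hc : N * q = c) (hk : |q - k| ≤ ε) (hNε : N * ε < 1) : q = k := by
  have hck : ((c - N * k : ℤ) : ℝ) = N * (q - k) := by push_cast; rw [← hc]; ring
  have hsmall : |((c - N * k : ℤ) : ℝ)| < 1 := by
    rw [hck, abs_mul, Nat.abs_cast]
    exact (mul_le_mul_of_nonneg_left hk N.cast_nonneg).trans_lt hNε
  have hzero : c - N * k = 0 := Int.abs_lt_one_iff.mp (by exact_mod_cast hsmall)
  rw [hzero, Int.cast_zero, eq_comm, mul_eq_zero] at hck
  exact sub_eq_zero.mp (hck.resolve_left (Nat.cast_ne_zero.mpr hN))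

lemma eq_of_mem_Ico_of_sub_eq_intCast {R : Type*} [Ring R] [LinearOrder R] [IsStrictOrderedRing R]
    [FloorRing R] {r s : R} (hr : r ∈ Ico 0 1) (hs : s ∈ Ico 0 1) {k : ℤ} (h : r - s = k) :
    r = s := by
  rw [← Int.fract_eq_self.2 hr, ← Int.fract_eq_self.2 hs]
  exact Int.fract_eq_fract.2 ⟨k, h⟩

lemma eventually_two_mul_rpow_lt_one {a : ℝ} (ha : a < 0) : ∀ᶠ P : ℝ in atTop, 2 * P ^ a < 1 := by
  have h := (tendsto_rpow_neg_atTop (neg_pos.mpr ha)).eventually (gt_mem_nhds one_half_pos)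
  simp only [neg_neg] at h
  filter_upwards [h] with P hP
  linarith

lemma mul_mul_two_mul_rpow_le {x y P ϖ e : ℝ} (hP : 1 ≤ P) (hx : x ≤ P ^ ϖ)
    (hy₀ : 0 ≤ y) (hy : y ≤ P ^ ϖ) (he : 1 ≤ e) :
    x * y * (2 * P ^ (-e + ϖ)) ≤ 2 * P ^ (3 * ϖ - 1) := by
  have hP₀ : 0 < P := one_pos.trans_le hP
  calc x * y * (2 * P ^ (-e + ϖ)) ≤ P ^ ϖ * P ^ ϖ * (2 * P ^ (-1 + ϖ)) := by
        gcongr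
    _ = 2 * P ^ (3 * ϖ - 1) := by
        rw [mul_left_comm, ← Real.rpow_add hP₀, ← Real.rpow_add hP₀]
        ring_nf

section denomIdeal

variable {K : Type*} [Field K] [NumberField K] {𝔫 : Ideal (𝓞 K)}

lemma mem_denomIdeal_iff {β : 𝓞 K} {γ : K} :
    β ∈ denomIdeal 𝔫 γ ↔ ∃ ν ∈ 𝔫, algebraMap (𝓞 K) K ν = algebraMap (𝓞 K) K β * γ := by
  simp [denomIdeal, Algebra.smul_def]

lemma denomIdeal_ne_bot (h𝔫 : 𝔫 ≠ ⊥) (γ : K) : denomIdeal 𝔫 γ ≠ ⊥ := by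
  obtain ⟨ν, hν, hν0⟩ := (Submodule.ne_bot_iff 𝔫).mp h𝔫
  obtain ⟨⟨a, s⟩, hs⟩ := IsLocalization.surj (nonZeroDivisors (𝓞 K)) γ
  refine (Submodule.ne_bot_iff _).mpr
    ⟨ν * s, mem_denomIdeal_iff.mpr ⟨ν * a, 𝔫.mul_mem_right a hν, ?_⟩,
      mul_ne_zero hν0 (nonZeroDivisors.coe_ne_zero s)⟩
  simp only [map_mul] at hs ⊢
  rw [← hs]; ring

lemma absNorm_iInf_denomIdeal_ne_zero (h𝔫 : 𝔫 ≠ ⊥) {ι : Type*} [Finite ι] (γ : ι → K) :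
    Ideal.absNorm (⨅ i, denomIdeal 𝔫 (γ i)) ≠ 0 := by
  have := Fintype.ofFinite ι
  rw [Ne, Ideal.absNorm_eq_zero_iff, ← Finset.inf_univ_eq_iInf]
  exact ne_bot_of_le_ne_bot (Finset.prod_ne_zero_iff.mpr fun i _ => denomIdeal_ne_bot h𝔫 (γ i))
    Ideal.prod_le_inf

lemma denomIdeal_inf_le_sub (x y : K) : denomIdeal 𝔫 x ⊓ denomIdeal 𝔫 y ≤ denomIdeal 𝔫 (x - y) := by
  intro β ⟨hx, hy⟩
  simp only [denomIdeal, Submodule.mem_comap, LinearMap.toSpanSingleton_apply, smul_sub] at hx hy ⊢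
  exact sub_mem hx hy

lemma natCast_absNorm_mul_absNorm_mem_denomIdeal_sub {ι : Type*} (γ₁ γ₂ : ι → K) (i : ι) :
    ((Ideal.absNorm (⨅ i, denomIdeal 𝔫 (γ₁ i)) * Ideal.absNorm (⨅ i, denomIdeal 𝔫 (γ₂ i)) : ℕ) :
      𝓞 K) ∈ denomIdeal 𝔫 (γ₁ i - γ₂ i) := by
  rw [Nat.cast_mul]
  exact denomIdeal_inf_le_sub _ _
    ⟨Ideal.mul_mem_right _ _ (iInf_le (fun i => denomIdeal 𝔫 (γ₁ i)) i (Ideal.absNorm_mem _)),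
      Ideal.mul_mem_left _ _ (iInf_le (fun i => denomIdeal 𝔫 (γ₂ i)) i (Ideal.absNorm_mem _))⟩

end denomIdeal

section IntegralCoordinates

variable {K : Type*} [Field K] [NumberField K] {𝔫 : Ideal (𝓞 K)} {ι : Type*} [Fintype ι]
  {b : Module.Basis ι ℤ 𝔫} {bK : Module.Basis ι ℚ K}

lemma repr_algebraMap_eq_intCast (hcompat : ∀ i, bK i = algebraMap (𝓞 K) K (b i : 𝓞 K))
    (ν : 𝔫) (j : ι) : bK.repr (algebraMap (𝓞 K) K ν) j = b.repr ν j := by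
  have hν : algebraMap (𝓞 K) K ν = ∑ i, (b.repr ν i : ℚ) • bK i := by
    calc algebraMap (𝓞 K) K ν = algebraMap (𝓞 K) K ((∑ i, b.repr ν i • b i : 𝔫) : 𝓞 K) := by
          rw [b.sum_repr]
      _ = _ := by
          simp only [Submodule.coe_sum, SetLike.val_smul_of_tower, map_sum, map_zsmul, hcompat,
            Int.cast_smul_eq_zsmul]
  rw [hν, bK.repr_sum_self]

lemma exists_repr_algebraMap_mul_eq_intCast
    (hcompat : ∀ i, bK i = algebraMap (𝓞 K) K (b i : 𝓞 K)) {β : 𝓞 K} {γ : K}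
    (hβ : β ∈ denomIdeal 𝔫 γ) (j : ι) :
    ∃ c : ℤ, bK.repr (algebraMap (𝓞 K) K β * γ) j = c := by
  obtain ⟨ν, hν, hνγ⟩ := mem_denomIdeal_iff.mp hβ
  exact ⟨b.repr ⟨ν, hν⟩ j, hνγ ▸ repr_algebraMap_eq_intCast hcompat ⟨ν, hν⟩ j⟩

lemma eq_of_natCast_mem_denomIdeal_sub (hcompat : ∀ i, bK i = algebraMap (𝓞 K) K (b i : 𝓞 K))
    {x y : K} (hx : ∀ j, bK.repr x j ∈ Ico 0 1) (hy : ∀ j, bK.repr y j ∈ Ico 0 1)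
    {N : ℕ} (hN : N ≠ 0) (hmem : (N : 𝓞 K) ∈ denomIdeal 𝔫 (x - y)) {ε : ℝ} (hNε : N * ε < 1)
    (hnear : ∀ j, ∃ k : ℤ, |(bK.repr (x - y) j : ℝ) - k| ≤ ε) : x = y := by
  refine bK.ext_elem fun j => ?_
  obtain ⟨k, hk⟩ := hnear j
  obtain ⟨c, hc⟩ := exists_repr_algebraMap_mul_eq_intCast hcompat hmem j
  rw [map_natCast, ← nsmul_eq_mul, map_nsmul, Finsupp.smul_apply, nsmul_eq_mul] at hc
  have hk_eq := eq_intCast_of_natCast_mul_eq_intCast hN (by exact_mod_cast hc) hk hNε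
  refine eq_of_mem_Ico_of_sub_eq_intCast (hx j) (hy j) (k := k) ?_
  rw [← Finsupp.sub_apply, ← map_sub]
  exact_mod_cast hk_eq

end IntegralCoordinates

lemma exists_abs_repr_sub_sub_intCast_le {K : Type*} [Field K] [NumberField K] {n T : ℕ}
    {bK : Module.Basis (Fin n) ℚ K} {d : Fin T → ℕ} {ϖ P : ℝ} {γ₁ γ₂ : Fin T → K}
    {α : Fin T → Fin n → ℝ} (h₁ : α ∈ majorArc bK d ϖ P γ₁) (h₂ : α ∈ majorArc bK d ϖ P γ₂)
    (i : Fin T) (j : Fin n) :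
    ∃ k : ℤ, |(bK.repr (γ₁ i - γ₂ i) j : ℝ) - k| ≤ 2 * P ^ (-(d i : ℝ) + ϖ) := by
  obtain ⟨m₁, hm₁⟩ := h₁.2 i
  obtain ⟨m₂, hm₂⟩ := h₂.2 i
  have e₁ := abs_le.mp ((norm_le_pi_norm _ j).trans hm₁)
  have e₂ := abs_le.mp ((norm_le_pi_norm _ j).trans hm₂)
  simp only [Pi.sub_apply] at e₁ e₂
  refine ⟨m₂ j - m₁ j, abs_le.mpr ?_⟩
  rw [map_sub, Finsupp.sub_apply]
  push_cast
  constructor <;> linarith [e₁.1, e₁.2, e₂.1, e₂.2]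

theorem major_arcs_disjoint_general (K : Type*) [Field K] [NumberField K]
    (n : ℕ) (𝔫 : Ideal (𝓞 K)) (h𝔫 : 𝔫 ≠ ⊥) (b : Module.Basis (Fin n) ℤ 𝔫)
    (bK : Module.Basis (Fin n) ℚ K)
    (hcompat : ∀ i, bK i = algebraMap (𝓞 K) K ((b i : 𝓞 K)))
    (T : ℕ) (D : ℝ)
    (d : Fin T → ℕ) (hd : ∀ i, 1 ≤ d i ∧ (d i : ℝ) ≤ D)
    (ϖ : ℝ) (hϖ : ϖ ∈ Set.Ioo (0 : ℝ) (1 / 3)) :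
    ∃ P₀ : ℝ, ∀ P : ℝ, P₀ ≤ P →
      ∀ γ₁ γ₂ : Fin T → K,
        (∀ i j, (bK.repr (γ₁ i) j : ℚ) ∈ Set.Ico (0 : ℚ) 1) →
        (∀ i j, (bK.repr (γ₂ i) j : ℚ) ∈ Set.Ico (0 : ℚ) 1) →
        (Ideal.absNorm (⨅ i, denomIdeal 𝔫 (γ₁ i)) : ℝ) ≤ P ^ ϖ →
        (Ideal.absNorm (⨅ i, denomIdeal 𝔫 (γ₂ i)) : ℝ) ≤ P ^ ϖ →
        γ₁ ≠ γ₂ →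
        majorArc bK d ϖ P γ₁ ∩ majorArc bK d ϖ P γ₂ = ∅ := by
  obtain ⟨P₀, hP₀⟩ := eventually_atTop.mp <| (eventually_ge_atTop 1).and
    (eventually_two_mul_rpow_lt_one (a := 3 * ϖ - 1) (by linarith [hϖ.2]))
  refine ⟨P₀, fun P hP γ₁ γ₂ hγ₁ hγ₂ hN₁ hN₂ hne => ?_⟩
  obtain ⟨hP₁, hsmall⟩ := hP₀ P hP
  refine Set.eq_empty_of_forall_notMem fun α ⟨hα₁, hα₂⟩ => hne (funext fun i => ?_)
  refine eq_of_natCast_mem_denomIdeal_sub hcompat (hγ₁ i) (hγ₂ i)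
    (mul_ne_zero (absNorm_iInf_denomIdeal_ne_zero h𝔫 γ₁) (absNorm_iInf_denomIdeal_ne_zero h𝔫 γ₂))
    (natCast_absNorm_mul_absNorm_mem_denomIdeal_sub γ₁ γ₂ i) ?_
    (exists_abs_repr_sub_sub_intCast_le hα₁ hα₂ i)
  push_cast
  exact (mul_mul_two_mul_rpow_le hP₁ hN₁ (Nat.cast_nonneg _) hN₂
    (by exact_mod_cast (hd i).1)).trans_lt hsmall

/-- Distinct major arcs with denominator of norm at most `P^ϖ` are disjoint for
all sufficiently large `P`. -/
theorem major_arcs_disjoint (K : Type*) [Field K] [NumberField K]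
    (n : ℕ) (𝔫 : Ideal (𝓞 K)) (h𝔫 : 𝔫 ≠ ⊥) (b : Module.Basis (Fin n) ℤ 𝔫)
    (bK : Module.Basis (Fin n) ℚ K)
    (hcompat : ∀ i, bK i = algebraMap (𝓞 K) K ((b i : 𝓞 K)))
    (T : ℕ) (hT : 1 ≤ T) (D : ℝ) (hD : 1 ≤ D)
    (d : Fin T → ℕ) (hd : ∀ i, 1 ≤ d i ∧ (d i : ℝ) ≤ D)
    (ϖ : ℝ) (hϖ : ϖ ∈ Set.Ioo (0 : ℝ) (1 / 3)) :
    ∃ P₀ : ℝ, ∀ P : ℝ, P₀ ≤ P →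
      ∀ γ₁ γ₂ : Fin T → K,
        (∀ i j, (bK.repr (γ₁ i) j : ℚ) ∈ Set.Ico (0 : ℚ) 1) →
        (∀ i j, (bK.repr (γ₂ i) j : ℚ) ∈ Set.Ico (0 : ℚ) 1) →
        (Ideal.absNorm (⨅ i, denomIdeal 𝔫 (γ₁ i)) : ℝ) ≤ P ^ ϖ →
        (Ideal.absNorm (⨅ i, denomIdeal 𝔫 (γ₂ i)) : ℝ) ≤ P ^ ϖ →
        γ₁ ≠ γ₂ →
        majorArc bK d ϖ P γ₁ ∩ majorArc bK d ϖ P γ₂ = ∅ :=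
  major_arcs_disjoint_general K n 𝔫 h𝔫 b bK hcompat T D d hd ϖ hϖ
end

section
/- Let $V$ be a finite-dimensional real vector space with a lattice $\Lambda$ and sup-norm $|\cdot|$ with respect to a $\mathbb{Z}$-basis of $\Lambda$. Let $f: V^s \to \mathbb{R}$, let $\Phi(x) = e^{2\pi i x}$, let $q$ be an $\mathbb{R}$-linear automorphism of $V$ preserving a sublattice structure (multiplication by a nonzero algebraic integer in the number field setting), and let $H \in \mathbb{Z}$ with $1 \leq H \ll P/|q|$ where $|q|$ bounds the operator. Then for any box $\mathcal{I}$ aligned to the basis, $\left|\sum_{x \in \Lambda^s \cap P\mathcal{I}} e^{2\pi i f(x)}\right|^2 \ll (P/H)^{ns} \sum_{h \in \Lambda^s,\ |h| < H} \left|\sum_{x \in \Lambda^s \cap P\mathcal{I}'(h)} e^{2\pi i (f(x + qh) - f(x))}\right|$, where each $\mathcal{I}'(h) \subseteq \mathcal{I}$ is a box aligned to the basis depending on $h$, $n = \dim V$, and the implied constant depends only on $V$, $\Lambda$, and $s$. -/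
open scoped Real

/-- `e(t) = e^{2πit}`. -/
noncomputable def eChar (t : ℝ) : ℂ := Complex.exp (2 * Real.pi * Complex.I * t)

/-!
Averaging over the `H^{ns}` translates `x ↦ x + q u`, `u ∈ [0, H)^{ns}`, does not change the sum,
and since `H ‖q‖ ≪ P` all translated summands live in one cube with `≪ P^{ns}` lattice points.
Cauchy–Schwarz over that cube and expanding the square bound `H^{2ns} |∑ e(f)|²` by `P^{ns}` times
the sum over pairs `u, u'` of the correlations `∑ₓ g(x + q(u - u')) conj g(x)`. Each difference
`h = u - u'` occurs at most `H^{ns}` times, and the correlation at `h` is the differenced sum over the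
lattice points `x` with both `x` and `x + qh` in the box, i.e. over the box `𝓘 ∩ (𝓘 - qh/P)`.
-/

open Finset ComplexConjugate

section VanDerCorput

variable {M : Type*} [AddCommGroup M] {U D : Finset M}

theorem sum_sum_sub_le_card_mul_sum {φ : M → ℝ} (hφ : ∀ h, 0 ≤ φ h)
    (hUD : ∀ u ∈ U, ∀ u' ∈ U, u - u' ∈ D) :
    ∑ u ∈ U, ∑ u' ∈ U, φ (u - u') ≤ #U * ∑ h ∈ D, φ h := by
  classical
  rw [← nsmul_eq_mul, ← sum_const]
  refine sum_le_sum fun u hu => ?_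
  rw [← sum_image fun x _ y _ hxy => sub_right_injective hxy]
  refine sum_le_sum_of_subset_of_nonneg ?_ fun h _ _ => hφ h
  simpa [image_subset_iff] using hUD u hu

variable {𝕜 Λ : Type*} [RCLike 𝕜] [AddCommGroup Λ]

noncomputable def correlation (g : Λ → 𝕜) (h : Λ) : 𝕜 := ∑' x, g (x + h) * conj (g x)

variable (g : Λ → 𝕜) (Q : M →+ Λ) {X : Finset Λ}

theorem tsum_sum_shift_eq_card_mul_tsum (hX : ∀ u ∈ U, ∀ x ∉ X, g (x + Q u) = 0) :
    ∑' x, ∑ u ∈ U, g (x + Q u) = #U * ∑' x, g x := by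
  rw [Summable.tsum_finsetSum fun u hu => summable_of_ne_finset_zero (hX u hu), ← nsmul_eq_mul,
    ← sum_const]
  exact sum_congr rfl fun u _ => (Equiv.addRight (Q u)).tsum_eq g

theorem sum_mul_conj_shift_eq_correlation (hX : ∀ u ∈ U, ∀ x ∉ X, g (x + Q u) = 0)
    {u : M} (hu : u ∈ U) (u' : M) :
    ∑ x ∈ X, g (x + Q u) * conj (g (x + Q u')) = correlation g (Q (u - u')) := by
  rw [correlation, ← (Equiv.addRight (Q u')).tsum_eq,
    ← tsum_eq_sum (L := .unconditional _) fun x hx => by rw [hX u hu x hx, zero_mul]]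
  simp [add_assoc]

theorem sum_norm_sq_sum_shift_le (hX : ∀ u ∈ U, ∀ x ∉ X, g (x + Q u) = 0) :
    ∑ x ∈ X, ‖∑ u ∈ U, g (x + Q u)‖ ^ 2 ≤ ∑ u ∈ U, ∑ u' ∈ U, ‖correlation g (Q (u - u'))‖ := by
  have expand : ((∑ x ∈ X, ‖∑ u ∈ U, g (x + Q u)‖ ^ 2 : ℝ) : 𝕜) =
      ∑ u ∈ U, ∑ u' ∈ U, correlation g (Q (u - u')) := by
    push_cast
    simp_rw [← RCLike.mul_conj, map_sum, sum_mul_sum]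
    rw [sum_comm]
    refine sum_congr rfl fun u hu => ?_
    rw [sum_comm]
    exact sum_congr rfl fun u' _ => sum_mul_conj_shift_eq_correlation g Q hX hu u'
  calc ∑ x ∈ X, ‖∑ u ∈ U, g (x + Q u)‖ ^ 2
      = RCLike.re (∑ u ∈ U, ∑ u' ∈ U, correlation g (Q (u - u'))) := by
        rw [← expand, RCLike.ofReal_re]
    _ ≤ ‖∑ u ∈ U, ∑ u' ∈ U, correlation g (Q (u - u'))‖ := RCLike.re_le_norm _
    _ ≤ ∑ u ∈ U, ∑ u' ∈ U, ‖correlation g (Q (u - u'))‖ :=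
        (norm_sum_le _ _).trans (sum_le_sum fun u _ => norm_sum_le _ _)

theorem norm_tsum_sq_le_card_div_card_mul_sum_norm_correlation (hU : U.Nonempty)
    (hUD : ∀ u ∈ U, ∀ u' ∈ U, u - u' ∈ D) (hX : ∀ u ∈ U, ∀ x ∉ X, g (x + Q u) = 0) :
    ‖∑' x, g x‖ ^ 2 ≤ #X / #U * ∑ h ∈ D, ‖correlation g (Q h)‖ := by
  have hU₀ : (0 : ℝ) < #U := by exact_mod_cast hU.card_pos
  have hG : ∀ x ∉ X, ∑ u ∈ U, g (x + Q u) = 0 := fun x hx =>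
    sum_eq_zero fun u hu => hX u hu x hx
  have key : #U * (#U * ‖∑' x, g x‖ ^ 2) ≤ #U * (#X * ∑ h ∈ D, ‖correlation g (Q h)‖) := calc
    #U * (#U * ‖∑' x, g x‖ ^ 2) = ‖∑ x ∈ X, ∑ u ∈ U, g (x + Q u)‖ ^ 2 := by
      rw [← tsum_eq_sum (L := .unconditional _) hG, tsum_sum_shift_eq_card_mul_tsum g Q hX,
        norm_mul, RCLike.norm_natCast]
      ring
    _ ≤ #X * ∑ x ∈ X, ‖∑ u ∈ U, g (x + Q u)‖ ^ 2 :=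
      (pow_le_pow_left₀ (norm_nonneg _) (norm_sum_le _ _) 2).trans sq_sum_le_card_mul_sum_sq
    _ ≤ #X * ∑ u ∈ U, ∑ u' ∈ U, ‖correlation g (Q (u - u'))‖ := by
      gcongr; exact sum_norm_sq_sum_shift_le g Q hX
    _ ≤ #X * (#U * ∑ h ∈ D, ‖correlation g (Q h)‖) := by
      gcongr; exact sum_sum_sub_le_card_mul_sum (fun h => norm_nonneg (correlation g (Q h))) hUD
    _ = #U * (#X * ∑ h ∈ D, ‖correlation g (Q h)‖) := by ring
  rw [div_mul_eq_mul_div, le_div_iff₀ hU₀, mul_comm]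
  exact le_of_mul_le_mul_left key hU₀

end VanDerCorput

section LatticeMaps

variable {κ κ' : Type*}

theorem exists_addMonoidHom_int_lift {F : Type*} [FunLike F (κ → ℝ) (κ' → ℝ)]
    [AddMonoidHomClass F (κ → ℝ) (κ' → ℝ)] (q : F)
    (hq : ∀ m : κ → ℤ, ∃ m' : κ' → ℤ, q (fun j => (m j : ℝ)) = fun j => (m' j : ℝ)) :
    ∃ Q : (κ → ℤ) →+ (κ' → ℤ), ∀ m, q (fun j => (m j : ℝ)) = fun j => (Q m j : ℝ) := by
  choose Q hQ using hq
  refine ⟨AddMonoidHom.mk' Q fun m m' => ?_, hQ⟩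
  have hadd : q (fun j => ((m + m') j : ℝ)) = q (fun j => (m j : ℝ)) + q (fun j => (m' j : ℝ)) := by
    rw [← map_add]
    congr 1
    funext j
    push_cast [Pi.add_apply]
    rfl
  rw [hQ, hQ, hQ] at hadd
  funext k
  exact_mod_cast (congrFun hadd k).trans (Int.cast_add _ _).symm

variable [Fintype κ] [Fintype κ']

theorem abs_apply_le_opNorm_mul (q : (κ → ℝ) →L[ℝ] (κ' → ℝ)) {v : κ → ℝ} {R : ℝ} (hR : 0 ≤ R)
    (hv : ∀ j, |v j| ≤ R) (k : κ') : |q v k| ≤ ‖q‖ * R := calc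
  |q v k| ≤ ‖q v‖ := norm_le_pi_norm (q v) k
  _ ≤ ‖q‖ * ‖v‖ := q.le_opNorm v
  _ ≤ ‖q‖ * R := by gcongr; exact (pi_norm_le_iff_of_nonneg hR).2 hv

theorem one_le_opNorm_of_mapsTo_lattice [DecidableEq κ] (q : (κ → ℝ) →L[ℝ] (κ' → ℝ)) (hq₀ : q ≠ 0)
    (hq : ∀ m : κ → ℤ, ∃ m' : κ' → ℤ, q (fun j => (m j : ℝ)) = fun j => (m' j : ℝ)) :
    1 ≤ ‖q‖ := by
  obtain ⟨j, hj⟩ : ∃ j, q (Pi.single j 1) ≠ 0 := by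
    by_contra! h
    refine hq₀ (ContinuousLinearMap.coe_injective (LinearMap.pi_ext fun j x => ?_))
    rw [← mul_one x, ← smul_eq_mul, Pi.single_smul']
    simp [h]
  obtain ⟨m', hm'⟩ := hq (Pi.single j 1)
  have hsingle : (fun k => ((Pi.single j (1 : ℤ) : κ → ℤ) k : ℝ)) = Pi.single j 1 := by
    funext k; simp [Pi.single_apply]
  rw [hsingle] at hm'
  obtain ⟨k, hk⟩ : ∃ k, m' k ≠ 0 := by
    by_contra! h
    exact hj (by rw [hm']; funext k; simp [h])
  calc (1 : ℝ) ≤ |(m' k : ℝ)| := by exact_mod_cast Int.one_le_abs hk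
    _ = |q (Pi.single j 1) k| := by rw [hm']
    _ ≤ ‖q‖ * 1 := abs_apply_le_opNorm_mul q zero_le_one
      (fun i => by rcases eq_or_ne i j with rfl | hij <;> simp [*]) k
    _ = ‖q‖ := mul_one _

theorem abs_int_lift_apply_le (q : (κ → ℝ) →L[ℝ] (κ' → ℝ)) {Q : (κ → ℤ) → κ' → ℤ}
    (hQ : ∀ m, q (fun j => (m j : ℝ)) = fun j => (Q m j : ℝ)) {m : κ → ℤ} {R : ℝ} (hR : 0 ≤ R)
    (hm : ∀ j, |(m j : ℝ)| ≤ R) (k : κ') : |(Q m k : ℝ)| ≤ ‖q‖ * R := by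
  simpa [hQ] using abs_apply_le_opNorm_mul q hR hm k

end LatticeMaps

theorem eChar_mul_conj (s t : ℝ) : eChar s * conj (eChar t) = eChar (s - t) := by
  rw [eChar, eChar, ← Complex.exp_conj, ← Complex.exp_add]
  congr 1
  simp only [map_mul, Complex.conj_I, Complex.conj_ofReal, map_ofNat]
  push_cast
  ring

section LatticeBoxes

variable {ι κ : Type*}

def latticeBox (P : ℝ) (a b : ι → κ → ℝ) : Set (ι → κ → ℤ) :=
  {x | ∀ i j, P * a i j ≤ (x i j : ℝ) ∧ (x i j : ℝ) ≤ P * b i j}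

variable {P : ℝ} {a b : ι → κ → ℝ}

theorem mem_latticeBox_inter_iff (hP : 0 < P) {x y : ι → κ → ℤ} :
    x ∈ latticeBox P (fun i j => max (a i j) (a i j - y i j / P))
        (fun i j => min (b i j) (b i j - y i j / P)) ↔
      x ∈ latticeBox P a b ∧ x + y ∈ latticeBox P a b := by
  simp only [latticeBox, Set.mem_ofPred_eq, mul_max_of_nonneg _ _ hP.le,
    mul_min_of_nonneg _ _ hP.le, mul_sub, mul_div_cancel₀ _ hP.ne', max_le_iff, le_min_iff,
    Pi.add_apply, Int.cast_add, sub_le_iff_le_add, le_sub_iff_add_le, and_and_and_comm, forall_and]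

theorem tsum_indicator_latticeBox_inter_eq_correlation (f : (ι → κ → ℝ) → ℝ) (hP : 0 < P)
    (y : ι → κ → ℤ) :
    ∑' x, (latticeBox P (fun i j => max (a i j) (a i j - y i j / P))
        (fun i j => min (b i j) (b i j - y i j / P))).indicator
        (fun x => eChar (f ((fun i j => (x i j : ℝ)) + fun i j => (y i j : ℝ)) -
          f fun i j => (x i j : ℝ))) x =
      correlation ((latticeBox P a b).indicator fun x => eChar (f fun i j => (x i j : ℝ))) y := by
  classical
  refine tsum_congr fun x => ?_
  have hcast :
      ((fun i j => (x i j : ℝ)) + fun i j => (y i j : ℝ)) = fun i j => ((x + y) i j : ℝ) := by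
    funext i j; push_cast [Pi.add_apply]; rfl
  rw [Set.indicator_apply, mem_latticeBox_inter_iff hP, hcast]
  by_cases hx : x ∈ latticeBox P a b
  · by_cases hxy : x + y ∈ latticeBox P a b
    · simp [hx, hxy, eChar_mul_conj]
    · simp [hx, hxy]
  · simp [hx]

variable [Fintype ι] [Fintype κ] [DecidableEq ι] [DecidableEq κ]

variable (ι κ) in
noncomputable def intBox (lo hi : ℤ) : Finset (ι → κ → ℤ) :=
  Fintype.piFinset fun _ => Fintype.piFinset fun _ => Icc lo hi

theorem mem_intBox {lo hi : ℤ} {x : ι → κ → ℤ} :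
    x ∈ intBox ι κ lo hi ↔ ∀ i j, lo ≤ x i j ∧ x i j ≤ hi := by
  simp [intBox]

theorem card_intBox (lo hi : ℤ) :
    #(intBox ι κ lo hi) = (hi + 1 - lo).toNat ^ (Fintype.card ι * Fintype.card κ) := by
  simp [intBox, Fintype.card_piFinset, pow_mul']

variable (ι κ) in
noncomputable def intCube (R : ℝ) : Finset (ι → κ → ℤ) := intBox ι κ (-⌊R⌋) ⌊R⌋

theorem mem_intCube {R : ℝ} {x : ι → κ → ℤ} : x ∈ intCube ι κ R ↔ ∀ i j, |(x i j : ℝ)| ≤ R := by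
  simp only [intCube, mem_intBox, neg_le, Int.le_floor, abs_le]
  push_cast
  exact forall₂_congr fun i j => and_congr_left' neg_le

theorem card_intCube_le {R : ℝ} (hR : 0 ≤ R) :
    (#(intCube ι κ R) : ℝ) ≤ (2 * R + 1) ^ (Fintype.card ι * Fintype.card κ) := by
  rw [intCube, card_intBox, Nat.cast_pow]
  gcongr
  have hfloor : (0 : ℤ) ≤ ⌊R⌋ := Int.floor_nonneg.2 hR
  rw [show ⌊R⌋ + 1 - -⌊R⌋ = 2 * ⌊R⌋ + 1 by ring, ← Int.cast_natCast, Int.toNat_of_nonneg (by omega)]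
  push_cast
  linarith [Int.floor_le R]

theorem card_intCube_div_card_intBox_le {c P : ℝ} {H : ℤ} (hc : 0 ≤ c) (hcP : 1 ≤ c * P)
    (hH : 1 ≤ H) :
    (#(intCube ι κ (P + c * P)) : ℝ) / #(intBox ι κ 0 (H - 1)) ≤
      (2 + 3 * c) ^ (Fintype.card ι * Fintype.card κ) *
        (P / H) ^ (Fintype.card ι * Fintype.card κ) := by
  have hP : 0 ≤ P := by nlinarith
  have hcardU : (#(intBox ι κ 0 (H - 1)) : ℝ) = (H : ℝ) ^ (Fintype.card ι * Fintype.card κ) := by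
    rw [card_intBox, show H - 1 + 1 - 0 = H by ring, Nat.cast_pow, ← Int.cast_natCast,
      Int.toNat_of_nonneg (by omega)]
  rw [hcardU, ← mul_pow, ← mul_div_assoc, div_pow]
  gcongr
  exact (card_intCube_le (by positivity)).trans (by gcongr; linarith)

theorem tsum_indicator_abs_lt_eq_sum_intBox {α : Type*} [AddCommMonoid α] [TopologicalSpace α]
    (F : (ι → κ → ℤ) → α) (H : ℤ) :
    ∑' h, Set.indicator {h | ∀ i j, |(h i j : ℝ)| < H} F h =
      ∑ h ∈ intBox ι κ (1 - H) (H - 1), F h := by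
  have hset : {h : ι → κ → ℤ | ∀ i j, |(h i j : ℝ)| < H} = intBox ι κ (1 - H) (H - 1) := by
    ext h
    simp only [Set.mem_ofPred_eq, mem_coe, mem_intBox, abs_lt]
    refine forall₂_congr fun i j => ?_
    norm_cast
    omega
  rw [hset, tsum_eq_sum fun h hh => Set.indicator_of_notMem hh F]
  exact sum_congr rfl fun h hh => Set.indicator_of_mem hh F

theorem mem_intCube_of_add_mem_latticeBox (hP : 0 ≤ P) (ha : ∀ i j, -1 ≤ a i j)
    (hb : ∀ i j, b i j ≤ 1) {x y : ι → κ → ℤ} {ρ : ℝ} (hy : ∀ i j, |(y i j : ℝ)| ≤ ρ)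
    (hxy : x + y ∈ latticeBox P a b) : x ∈ intCube ι κ (P + ρ) := by
  refine mem_intCube.2 fun i j => ?_
  obtain ⟨hlo, hhi⟩ := hxy i j
  have hPa : -P ≤ P * a i j := by nlinarith [ha i j]
  have hPb : P * b i j ≤ P := by nlinarith [hb i j]
  push_cast [Pi.add_apply] at hlo hhi
  have hyij := abs_le.1 (hy i j)
  rw [abs_le]
  constructor <;> linarith

theorem abs_le_of_mem_intBox {H : ℤ} {u : ι → κ → ℤ} (hu : u ∈ intBox ι κ 0 (H - 1)) (i : ι)
    (j : κ) : |(u i j : ℝ)| ≤ H := by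
  obtain ⟨h0, h1⟩ := mem_intBox.1 hu i j
  exact abs_le.2
    ⟨by exact_mod_cast (by omega : -H ≤ u i j), by exact_mod_cast (by omega : u i j ≤ H)⟩

theorem sub_mem_intBox {H : ℤ} {u u' : ι → κ → ℤ} (hu : u ∈ intBox ι κ 0 (H - 1))
    (hu' : u' ∈ intBox ι κ 0 (H - 1)) : u - u' ∈ intBox ι κ (1 - H) (H - 1) := by
  refine mem_intBox.2 fun i j => ?_
  have := mem_intBox.1 hu i j
  have := mem_intBox.1 hu' i j
  simp only [Pi.sub_apply]
  omega

end LatticeBoxes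

theorem van_der_corput_differencing_general (n s : ℕ)
    (c₀ : ℝ) (hc₀ : 0 < c₀) :
    ∃ C : ℝ, 0 < C ∧
      ∀ (f : (Fin s → Fin n → ℝ) → ℝ) (q : (Fin n → ℝ) →L[ℝ] (Fin n → ℝ)),
        Function.Bijective q →
        (∀ m : Fin n → ℤ, ∃ m' : Fin n → ℤ,
          q (fun j => (m j : ℝ)) = fun j => (m' j : ℝ)) →
        ∀ (H : ℤ) (P : ℝ), 1 ≤ H → 0 < P → (H : ℝ) ≤ c₀ * P / ‖q‖ →
        ∀ a b : Fin s → Fin n → ℝ,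
          (∀ i j, -1 ≤ a i j ∧ a i j ≤ b i j ∧ b i j ≤ 1) →
        ∃ a' b' : (Fin s → Fin n → ℤ) → Fin s → Fin n → ℝ,
          (∀ h i j, a i j ≤ a' h i j ∧ b' h i j ≤ b i j) ∧
          ‖∑' x : Fin s → Fin n → ℤ,
              Set.indicator
                {x : Fin s → Fin n → ℤ |
                  ∀ i j, P * a i j ≤ (x i j : ℝ) ∧ (x i j : ℝ) ≤ P * b i j}
                (fun x => eChar (f (fun i j => (x i j : ℝ)))) x‖ ^ 2
            ≤ C * (P / (H : ℝ)) ^ (n * s) *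
              ∑' h : Fin s → Fin n → ℤ,
                Set.indicator
                  {h : Fin s → Fin n → ℤ | ∀ i j, |(h i j : ℝ)| < (H : ℝ)}
                  (fun h =>
                    ‖∑' x : Fin s → Fin n → ℤ,
                      Set.indicator
                        {x : Fin s → Fin n → ℤ |
                          ∀ i j, P * a' h i j ≤ (x i j : ℝ) ∧
                            (x i j : ℝ) ≤ P * b' h i j}
                        (fun x => eChar
                          (f ((fun i j => (x i j : ℝ)) +
                                fun i => q (fun j => (h i j : ℝ))) -
                            f (fun i j => (x i j : ℝ)))) x‖) h := by
  classical
  refine ⟨(2 + 3 * c₀) ^ (n * s), by positivity, fun f q _ hqlat H P hH hP hHP a b hab => ?_⟩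
  obtain ⟨Q, hQ⟩ := exists_addMonoidHom_int_lift q hqlat
  have hH₁ : (1 : ℝ) ≤ H := by exact_mod_cast hH
  -- `q = 0` is excluded because then `c₀ * P / ‖q‖ = c₀ * P / 0 = 0 < H`.
  have hq : 1 ≤ ‖q‖ :=
    one_le_opNorm_of_mapsTo_lattice q (by rintro rfl; simp at hHP; linarith) hqlat
  have hqH : ‖q‖ * H ≤ c₀ * P := by rwa [le_div_iff₀ (by linarith), mul_comm] at hHP
  set g := (latticeBox P a b).indicator fun x => eChar (f fun i j => (x i j : ℝ))
  have hX : ∀ u ∈ intBox (Fin s) (Fin n) 0 (H - 1), ∀ x ∉ intCube (Fin s) (Fin n) (P + c₀ * P),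
      g (x + Q.compLeft _ u) = 0 := fun u hu x hx =>
    Set.indicator_of_notMem (fun hmem => hx <| mem_intCube_of_add_mem_latticeBox hP.le
      (fun i j => (hab i j).1) (fun i j => (hab i j).2.2) (fun i j =>
        (abs_int_lift_apply_le q hQ (zero_le_one.trans hH₁) (abs_le_of_mem_intBox hu i) j).trans
          hqH) hmem) _
  refine ⟨fun h i j => max (a i j) (a i j - Q (h i) j / P),
    fun h i j => min (b i j) (b i j - Q (h i) j / P),
    fun h i j => ⟨le_max_left _ _, min_le_left _ _⟩, ?_⟩
  simp only [hQ, tsum_indicator_abs_lt_eq_sum_intBox]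
  calc ‖∑' x, g x‖ ^ 2
      ≤ _ := norm_tsum_sq_le_card_div_card_mul_sum_norm_correlation g (Q.compLeft (Fin s))
        ⟨0, by simp [mem_intBox]; omega⟩ (fun u hu u' hu' => sub_mem_intBox hu hu') hX
    _ ≤ (2 + 3 * c₀) ^ (n * s) * (P / H) ^ (n * s) *
        ∑ h ∈ intBox (Fin s) (Fin n) (1 - H) (H - 1), ‖correlation g (Q.compLeft (Fin s) h)‖ := by
      gcongr
      simpa [mul_comm] using
        card_intCube_div_card_intBox_le (ι := Fin s) (κ := Fin n) hc₀.le (by nlinarith) hH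
    _ = _ := congrArg _ <| sum_congr rfl fun h _ => congrArg _
      (tsum_indicator_latticeBox_inter_eq_correlation f hP (Q.compLeft (Fin s) h)).symm

/-- Lattice (van der Corput) differencing inequality: for the lattice `ℤ^n ⊆ ℝ^n`
(`s` copies), a linear automorphism `q` preserving the lattice, and `1 ≤ H ≪ P/‖q‖`,
the square of an exponential sum over the lattice points of a dilated box is bounded
by `(P/H)^{ns}` times the sum over short lattice vectors `h` of differenced
exponential sums over sub-boxes `𝓘'(h) ⊆ 𝓘`. -/
theorem van_der_corput_differencing (n s : ℕ) (hn : 1 ≤ n) (hs : 1 ≤ s)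
    (c₀ : ℝ) (hc₀ : 0 < c₀) :
    ∃ C : ℝ, 0 < C ∧
      ∀ (f : (Fin s → Fin n → ℝ) → ℝ) (q : (Fin n → ℝ) →L[ℝ] (Fin n → ℝ)),
        Function.Bijective q →
        (∀ m : Fin n → ℤ, ∃ m' : Fin n → ℤ,
          q (fun j => (m j : ℝ)) = fun j => (m' j : ℝ)) →
        ∀ (H : ℤ) (P : ℝ), 1 ≤ H → 0 < P → (H : ℝ) ≤ c₀ * P / ‖q‖ →
        ∀ a b : Fin s → Fin n → ℝ,
          (∀ i j, -1 ≤ a i j ∧ a i j ≤ b i j ∧ b i j ≤ 1) →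
        ∃ a' b' : (Fin s → Fin n → ℤ) → Fin s → Fin n → ℝ,
          (∀ h i j, a i j ≤ a' h i j ∧ b' h i j ≤ b i j) ∧
          ‖∑' x : Fin s → Fin n → ℤ,
              Set.indicator
                {x : Fin s → Fin n → ℤ |
                  ∀ i j, P * a i j ≤ (x i j : ℝ) ∧ (x i j : ℝ) ≤ P * b i j}
                (fun x => eChar (f (fun i j => (x i j : ℝ)))) x‖ ^ 2
            ≤ C * (P / (H : ℝ)) ^ (n * s) *
              ∑' h : Fin s → Fin n → ℤ,
                Set.indicator
                  {h : Fin s → Fin n → ℤ | ∀ i j, |(h i j : ℝ)| < (H : ℝ)}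
                  (fun h =>
                    ‖∑' x : Fin s → Fin n → ℤ,
                      Set.indicator
                        {x : Fin s → Fin n → ℤ |
                          ∀ i j, P * a' h i j ≤ (x i j : ℝ) ∧
                            (x i j : ℝ) ≤ P * b' h i j}
                        (fun x => eChar
                          (f ((fun i j => (x i j : ℝ)) +
                                fun i => q (fun j => (h i j : ℝ))) -
                            f (fun i j => (x i j : ℝ)))) x‖) h :=
  van_der_corput_differencing_general n s c₀ hc₀
end
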